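/- arXiv:2106.07418 — 8 statements merged into one kernel-verified Lean document; each statement's English description precedes it below -/
import Mathlib

section
/- Let X be a subset of {1,...,n-1}. Define f_X(i) = #{j in X : j < i} + (n - i if i not in X, 0 if i in X) for i = 0,1,...,n. Then f_X is a bijection from {0,1,...,n} to {0,1,...,n}. -/
/-!
Write `c(i)` for the number of elements of `X` below `i`, and take `i < j ≤ n`. If `i ∈ X`, then
`c` jumps at `i`, so `f(i) = c(i) < c(j) ≤ f(j)`. If `i ∉ X`, then `c` grows by at most `j - i - 1`
from `i` to `j`, so `f(j) ≤ c(j) + (n - j) < c(i) + (n - i) = f(i)`. Hence `f` is injective on the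
finite set `[0, n]`, which it maps into itself because `c(i) ≤ i`.
-/

open Finset

namespace Nat

variable {p : ℕ → Prop} [DecidablePred p]

theorem count_add_le (p : ℕ → Prop) [DecidablePred p] (a b : ℕ) : count p (a + b) ≤ count p a + b :=
  (count_add p a b).trans_le (Nat.add_le_add_left (count_le _) _)

theorem count_add_one_le_of_lt {i j : ℕ} (hi : p i) (hij : i < j) : count p i + 1 ≤ count p j :=
  (count_succ_eq_succ_count hi).symm.trans_le (count_monotone p hij)

theorem count_add_one_add_le {i : ℕ} (hi : ¬p i) (k : ℕ) : count p (i + 1 + k) ≤ count p i + k :=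
  count_succ_eq_count hi ▸ count_add_le p (i + 1) k

/-- `countWithGap (· ∈ X) n` is the map `f_X`. -/
def countWithGap (p : ℕ → Prop) [DecidablePred p] (n i : ℕ) : ℕ :=
  count p i + if p i then 0 else n - i

theorem countWithGap_le {n i : ℕ} (hi : i ≤ n) : countWithGap p n i ≤ n := by
  have := count_le p (n := i)
  unfold countWithGap
  split_ifs <;> omega

theorem countWithGap_lt_of_lt {n i j : ℕ} (hi : p i) (hij : i < j) :
    countWithGap p n i < countWithGap p n j := by
  have := count_add_one_le_of_lt hi hij
  unfold countWithGap
  split_ifs <;> omega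

theorem countWithGap_lt_of_not {n i j : ℕ} (hi : ¬p i) (hij : i < j) (hj : j ≤ n) :
    countWithGap p n j < countWithGap p n i := by
  obtain ⟨k, rfl⟩ : ∃ k, j = i + 1 + k := Nat.exists_eq_add_of_le hij
  have := count_add_one_add_le hi k
  unfold countWithGap
  split_ifs <;> omega

theorem countWithGap_ne_of_lt {n i j : ℕ} (hij : i < j) (hj : j ≤ n) :
    countWithGap p n i ≠ countWithGap p n j := by
  by_cases hi : p i
  · exact (countWithGap_lt_of_lt hi hij).ne
  · exact (countWithGap_lt_of_not hi hij hj).ne'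

theorem bijOn_countWithGap (p : ℕ → Prop) [DecidablePred p] (n : ℕ) :
    Set.BijOn (countWithGap p n) (Set.Iic n) (Set.Iic n) := by
  refine ((Set.finite_Iic n).injOn_iff_bijOn_of_mapsTo fun i hi => countWithGap_le hi).1 ?_
  intro i hi j hj hij
  by_contra hne
  rcases Nat.lt_or_gt_of_ne hne with h | h
  · exact countWithGap_ne_of_lt h hj hij
  · exact countWithGap_ne_of_lt h hi hij.symm

end Nat

theorem Finset.card_filter_lt_eq_count (X : Finset ℕ) (i : ℕ) :
    #(X.filter (· < i)) = Nat.count (· ∈ X) i := by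
  rw [Nat.count_eq_card_filter_range]
  congr 1
  ext x
  simp [and_comm]

theorem stmt_0_general (n : ℕ) (X : Finset ℕ)
    (f : ℕ → ℕ)
    (hf : ∀ i, f i = (X.filter (· < i)).card + (if i ∈ X then 0 else n - i)) :
    Set.BijOn f (Set.Iic n) (Set.Iic n) := by
  have hf_eq : f = Nat.countWithGap (· ∈ X) n := by
    funext i
    rw [hf, Finset.card_filter_lt_eq_count]
    rfl
  exact hf_eq ▸ Nat.bijOn_countWithGap _ n

/-- For `X ⊆ {1,…,n-1}`, the map
`f_X(i) = #{j ∈ X : j < i} + (n - i if i ∉ X, 0 if i ∈ X)`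
is a bijection from `{0,1,…,n}` to `{0,1,…,n}`. -/
theorem stmt_0 (n : ℕ) (hn : 0 < n) (X : Finset ℕ) (hX : X ⊆ Finset.Icc 1 (n - 1))
    (f : ℕ → ℕ)
    (hf : ∀ i, f i = (X.filter (· < i)).card + (if i ∈ X then 0 else n - i)) :
    Set.BijOn f (Set.Iic n) (Set.Iic n) :=
  stmt_0_general n X f hf
end

section
/- For any subset X of {1,...,n-1}, the sum over i = 0,...,n of q^{f_X(i)} equals [n+1]_q = 1 + q + ... + q^n, where f_X(i) = #{j in X : j < i} + (n - i if i not in X, 0 if i in X). -/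
/-!
On `{0, …, n}` the exponent `f_X` is a permutation: the elements of `X` receive the values
`0, 1, 2, …` in increasing order, while the remaining `i` receive `n - #{j < i : j ∉ X}`, i.e. the
values `n, n - 1, …` in decreasing order. Concretely, for `a < b` we have `f_X a < f_X b` when
`a ∈ X` and `f_X b < f_X a` when `a ∉ X`, so `f_X` is injective, and it maps `{0, …, n}` into itself.
-/

open Finset

theorem Finset.sum_comp_eq_of_injOn {ι M : Type*} [AddCommMonoid M] {s : Finset ι} {e : ι → ι}
    (hmaps : Set.MapsTo e s s) (hinj : Set.InjOn e s) (g : ι → M) :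
    ∑ i ∈ s, g (e i) = ∑ i ∈ s, g i :=
  sum_nbij e hmaps hinj (surjOn_of_injOn_of_card_le e hmaps hinj le_rfl) fun _ _ ↦ rfl

section CardFilterLt

variable (X : Finset ℕ) {a b : ℕ}

theorem card_filter_lt_le (i : ℕ) : #(X.filter (· < i)) ≤ i :=
  (card_le_card fun _ hj ↦ mem_range.2 (mem_filter.1 hj).2).trans (card_range i).le

variable {X}

theorem card_filter_lt_add_one_le (ha : a ∈ X) (hab : a < b) :
    #(X.filter (· < a)) + 1 ≤ #(X.filter (· < b)) := by
  rw [← card_insert_of_notMem (a := a) (s := X.filter (· < a)) (by simp)]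
  refine card_le_card (insert_subset (mem_filter.2 ⟨ha, hab⟩) fun j hj ↦ ?_)
  obtain ⟨hjX, hja⟩ := mem_filter.1 hj
  exact mem_filter.2 ⟨hjX, hja.trans hab⟩

theorem card_filter_lt_le_add (ha : a ∉ X) :
    #(X.filter (· < b)) ≤ #(X.filter (· < a)) + (b - a - 1) := by
  have hsub : X.filter (· < b) ⊆ X.filter (· < a) ∪ Ico (a + 1) b := by
    intro j hj
    obtain ⟨hjX, hjb⟩ := mem_filter.1 hj
    have hja : j ≠ a := by rintro rfl; exact ha hjX
    rcases lt_or_gt_of_ne hja with hja | hja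
    · exact mem_union_left _ (mem_filter.2 ⟨hjX, hja⟩)
    · exact mem_union_right _ (mem_Ico.2 ⟨hja, hjb⟩)
  calc #(X.filter (· < b)) ≤ #(X.filter (· < a) ∪ Ico (a + 1) b) := card_le_card hsub
    _ ≤ #(X.filter (· < a)) + #(Ico (a + 1) b) := card_union_le _ _
    _ = #(X.filter (· < a)) + (b - a - 1) := by rw [Nat.card_Ico, Nat.sub_sub]

end CardFilterLt

/-- The exponent `f_X(i)` of the statement. -/
def subsetStat (X : Finset ℕ) (n i : ℕ) : ℕ :=
  #(X.filter (· < i)) + if i ∈ X then 0 else n - i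

section SubsetStat

variable {X : Finset ℕ} {n i a b : ℕ}

theorem subsetStat_le (hi : i ≤ n) : subsetStat X n i ≤ n := by
  have := card_filter_lt_le X i
  unfold subsetStat
  split_ifs <;> omega

theorem subsetStat_lt_of_mem (ha : a ∈ X) (hab : a < b) : subsetStat X n a < subsetStat X n b := by
  have := card_filter_lt_add_one_le ha hab
  unfold subsetStat
  split_ifs <;> omega

theorem subsetStat_lt_of_notMem (ha : a ∉ X) (hab : a < b) (hb : b ≤ n) :
    subsetStat X n b < subsetStat X n a := by
  have := card_filter_lt_le_add (b := b) ha
  unfold subsetStat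
  split_ifs <;> omega

theorem subsetStat_ne (hab : a < b) (hb : b ≤ n) : subsetStat X n a ≠ subsetStat X n b := by
  by_cases ha : a ∈ X
  · exact (subsetStat_lt_of_mem ha hab).ne
  · exact (subsetStat_lt_of_notMem ha hab hb).ne'

theorem subsetStat_injOn : Set.InjOn (subsetStat X n) (range (n + 1)) := by
  intro a ha b hb hab
  simp only [coe_range, Set.mem_Iio] at ha hb
  by_contra hne
  rcases lt_or_gt_of_ne hne with h | h
  · exact subsetStat_ne h (by omega) hab
  · exact subsetStat_ne h (by omega) hab.symm

theorem subsetStat_mapsTo : Set.MapsTo (subsetStat X n) (range (n + 1)) (range (n + 1)) :=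
  fun _ hi ↦ mem_range_succ_iff.2 (subsetStat_le (mem_range_succ_iff.1 hi))

end SubsetStat

theorem stmt_1_general {R : Type*} [CommRing R] (q : R) (n : ℕ)
    (X : Finset ℕ) :
    ∑ i ∈ Finset.range (n + 1),
        q ^ ((X.filter (· < i)).card + (if i ∈ X then 0 else n - i))
      = ∑ i ∈ Finset.range (n + 1), q ^ i :=
  sum_comp_eq_of_injOn (e := subsetStat X n) subsetStat_mapsTo subsetStat_injOn (q ^ ·)

/-- For `X ⊆ {1,…,n-1}`,
`∑_{i=0}^{n} q^{f_X(i)} = 1 + q + ⋯ + q^n`, where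
`f_X(i) = #{j ∈ X : j < i} + (n - i if i ∉ X, 0 if i ∈ X)`. -/
theorem stmt_1 {R : Type*} [CommRing R] (q : R) (n : ℕ) (hn : 0 < n)
    (X : Finset ℕ) (hX : X ⊆ Finset.Icc 1 (n - 1)) :
    ∑ i ∈ Finset.range (n + 1),
        q ^ ((X.filter (· < i)).card + (if i ∈ X then 0 else n - i))
      = ∑ i ∈ Finset.range (n + 1), q ^ i :=
  stmt_1_general q n X
end

section
/- For a finite poset P with n elements and a fixed natural labeling, the sum over all linear extensions T of P and all i = 0,...,n of q^{comaj(T,i)} · q^{#{j ∈ Des(T) : j < i}} equals [n+1]_q times the sum over all linear extensions T of q^{comaj(T)}, where comaj(T,i) = Σ_{j ∈ Des(T) ∪ {i}} (n - j). -/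
/-!
Fix the descent set `D` and write `d(i) = #{j ∈ D | j < i}`. The exponent `comaj(T,i) + d(i)`
exceeds `comaj(T)` by `g(i) = d(i)` if `i ∈ D` and by `g(i) = n - i + d(i)` otherwise. On
`{0,…,n}`, `g` sends the elements of `D` increasingly onto `0, 1, 2, …` and the other elements
decreasingly onto `n, n - 1, …`, so it permutes `{0,…,n}`, and the inner sum over `i` is
`[n+1]_q · q^{comaj(T)}` for every linear extension `T`.
-/

open scoped Classical

/-- A linear extension of a finite poset `P` with `n` elements, encoded as an
order-preserving bijection `P ≃ Fin n`. -/
def IsLinExt {P : Type*} [PartialOrder P] {n : ℕ} (T : P ≃ Fin n) : Prop :=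
  ∀ p q : P, p ≤ q → T p ≤ T q

/-- The descent set of a linear extension `T` with respect to the natural labeling `ω`:
those `i ∈ {1,…,n-1}` with `ω(T⁻¹(i)) > ω(T⁻¹(i+1))` (values `i`, `i+1` sit at
0-indexed positions `i-1`, `i`). -/
noncomputable def Des {P : Type*} [PartialOrder P] {n : ℕ} (ω T : P ≃ Fin n) : Finset ℕ :=
  (Finset.Ico 1 n).filter fun i =>
    ∀ h : i < n, ω (T.symm ⟨i, h⟩) < ω (T.symm ⟨i - 1, lt_of_le_of_lt (Nat.sub_le i 1) h⟩)

/-- comaj(T) = Σ_{j ∈ Des(T)} (n - j). -/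
noncomputable def comaj {P : Type*} [PartialOrder P] {n : ℕ} (ω T : P ≃ Fin n) : ℕ :=
  ∑ j ∈ Des ω T, (n - j)

/-- comaj(T,i) = Σ_{j ∈ Des(T) ∪ {i}} (n - j). -/
noncomputable def comaj' {P : Type*} [PartialOrder P] {n : ℕ} (ω T : P ≃ Fin n) (i : ℕ) : ℕ :=
  ∑ j ∈ insert i (Des ω T), (n - j)

namespace Finset

variable (D : Finset ℕ)

theorem card_filter_lt_le (i : ℕ) : #{j ∈ D | j < i} ≤ i := by
  simpa using card_le_card (s := {j ∈ D | j < i}) (t := range i) fun j hj => by simp_all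

theorem card_filter_lt_lt_of_mem {a b : ℕ} (hab : a < b) (ha : a ∈ D) :
    #{j ∈ D | j < a} < #{j ∈ D | j < b} := by
  refine card_lt_card ⟨fun j hj => by simp_all [lt_trans _ hab], fun h => ?_⟩
  simpa using h (mem_filter.2 ⟨ha, hab⟩)

theorem card_filter_lt_add_le_of_notMem {a b : ℕ} (hab : a < b) (ha : a ∉ D) :
    #{j ∈ D | j < b} + a + 1 ≤ #{j ∈ D | j < a} + b := by
  have hsub : {j ∈ D | j < b} ⊆ {j ∈ D | j < a} ∪ Ioo a b := by
    intro j hj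
    have hja : j ≠ a := fun h => ha (h ▸ (mem_filter.1 hj).1)
    simp only [mem_filter, mem_union, mem_Ioo] at hj ⊢
    rcases lt_or_gt_of_ne hja with h | h
    · exact Or.inl ⟨hj.1, h⟩
    · exact Or.inr ⟨h, hj.2⟩
  have := (card_le_card hsub).trans (card_union_le _ _)
  simp only [Nat.card_Ioo] at this
  omega

end Finset

open Finset

def comajIncrement (n : ℕ) (D : Finset ℕ) (i : ℕ) : ℕ :=
  if i ∈ D then #{j ∈ D | j < i} else n - i + #{j ∈ D | j < i}

theorem sum_insert_add_card_filter_lt (n : ℕ) (D : Finset ℕ) (i : ℕ) :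
    ∑ j ∈ insert i D, (n - j) + #{j ∈ D | j < i} = comajIncrement n D i + ∑ j ∈ D, (n - j) := by
  unfold comajIncrement
  split_ifs with hi
  · rw [insert_eq_of_mem hi, add_comm]
  · rw [sum_insert hi]
    omega

section comajIncrement

variable {n : ℕ} (D : Finset ℕ)

theorem comajIncrement_le {i : ℕ} (hi : i ≤ n) : comajIncrement n D i ≤ n := by
  have := D.card_filter_lt_le i
  unfold comajIncrement
  split_ifs <;> omega

theorem comajIncrement_ne_of_lt {a b : ℕ} (hab : a < b) (hb : b ≤ n) :
    comajIncrement n D a ≠ comajIncrement n D b := by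
  unfold comajIncrement
  by_cases ha : a ∈ D
  · have := D.card_filter_lt_lt_of_mem hab ha
    split_ifs <;> omega
  · have := D.card_filter_lt_add_le_of_notMem hab ha
    split_ifs <;> omega

theorem bijOn_comajIncrement :
    Set.BijOn (comajIncrement n D) (range (n + 1)) (range (n + 1)) := by
  have hmaps : Set.MapsTo (comajIncrement n D) (range (n + 1)) (range (n + 1)) :=
    fun i hi => by
      simp only [coe_range, Set.mem_Iio] at hi ⊢
      exact Nat.lt_succ_of_le (comajIncrement_le D (Nat.le_of_lt_succ hi))
  refine ((range (n + 1)).finite_toSet.injOn_iff_bijOn_of_mapsTo hmaps).1 fun a ha b hb hab => ?_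
  simp only [coe_range, Set.mem_Iio] at ha hb
  rcases lt_trichotomy a b with h | h | h
  · exact absurd hab (comajIncrement_ne_of_lt D h (by omega))
  · exact h
  · exact absurd hab.symm (comajIncrement_ne_of_lt D h (by omega))

end comajIncrement

theorem sum_range_pow_sum_insert {R : Type*} [CommSemiring R] (q : R) (n : ℕ) (D : Finset ℕ) :
    ∑ i ∈ range (n + 1), q ^ (∑ j ∈ insert i D, (n - j)) * q ^ #{j ∈ D | j < i}
      = (∑ i ∈ range (n + 1), q ^ i) * q ^ ∑ j ∈ D, (n - j) := by
  have hbij := bijOn_comajIncrement (n := n) D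
  rw [sum_mul]
  refine sum_nbij (comajIncrement n D) hbij.mapsTo hbij.injOn hbij.surjOn fun i _ => ?_
  rw [← pow_add, ← pow_add, sum_insert_add_card_filter_lt]

theorem stmt_2_general {P : Type*} [Fintype P] [DecidableEq P] [PartialOrder P]
    {R : Type*} [CommRing R] (q : R) (n : ℕ)
    (ω : P ≃ Fin n) :
    ∑ T ∈ Finset.univ.filter (fun T : P ≃ Fin n => IsLinExt T),
        ∑ i ∈ Finset.range (n + 1),
          q ^ comaj' ω T i * q ^ ((Des ω T).filter (· < i)).card
      = (∑ i ∈ Finset.range (n + 1), q ^ i) *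
          ∑ T ∈ Finset.univ.filter (fun T : P ≃ Fin n => IsLinExt T), q ^ comaj ω T := by
  rw [mul_sum]
  exact sum_congr rfl fun T _ => sum_range_pow_sum_insert q n (Des ω T)

/-- `∑_{T ∈ L(P)} ∑_{i=0}^{n} q^{comaj(T,i)} q^{#{j ∈ Des(T) : j < i}}
  = [n+1]_q · ∑_{T ∈ L(P)} q^{comaj(T)}`. -/
theorem stmt_2 {P : Type*} [Fintype P] [DecidableEq P] [PartialOrder P]
    {R : Type*} [CommRing R] (q : R) (n : ℕ) (hcard : Fintype.card P = n)
    (ω : P ≃ Fin n) (hω : IsLinExt ω) :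
    ∑ T ∈ Finset.univ.filter (fun T : P ≃ Fin n => IsLinExt T),
        ∑ i ∈ Finset.range (n + 1),
          q ^ comaj' ω T i * q ^ ((Des ω T).filter (· < i)).card
      = (∑ i ∈ Finset.range (n + 1), q ^ i) *
          ∑ T ∈ Finset.univ.filter (fun T : P ≃ Fin n => IsLinExt T), q ^ comaj ω T :=
  stmt_2_general q n ω
end

section
/- There is a bijection between barely set-valued linear extensions S of a finite poset P with n elements and triples (T, i, p) where T is a linear extension of P, i ∈ {0,1,...,n}, and p is a maximal element of T⁻¹({1,...,i}). -/
/-- A barely set-valued linear extension of a poset `P` with `n` elements: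
the (nonempty, finite) entries `S p` partition `{1,…,n+1}`, exactly one element
carries a doubleton while all others carry singletons, and `max S(p) < min S(q)`
whenever `p < q` (equivalently: every entry of `S p` is less than every entry of `S q`). -/
def IsBSVLinExt {P : Type*} [PartialOrder P] (n : ℕ) (S : P → Finset ℕ) : Prop :=
  (∀ p, (S p).Nonempty) ∧
  (∀ k, k ∈ Finset.Icc 1 (n + 1) ↔ ∃ p, k ∈ S p) ∧
  (∀ p q, p ≠ q → Disjoint (S p) (S q)) ∧
  (∃ p₀, (S p₀).card = 2 ∧ ∀ p, p ≠ p₀ → (S p).card = 1) ∧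
  (∀ p q, p < q → ∀ a ∈ S p, ∀ b ∈ S q, a < b)

/-!
Given `(T, i, p)`, relabel the positions `1, …, n` of `T` order-preservingly by
`{1, …, n+1} \ {i+1}` (positions `≤ i` keep their label, the others move up by one) and give
the freed label `i + 1` to `p` as a second entry. Since `T p ≤ i`, the label `i + 1` is the larger
entry of `p`, and it stays below the labels of all elements above `p` exactly because `p` is
maximal among the elements at positions `≤ i`. Conversely, `p` is the element with two entries,
`i + 1` its larger entry, and `T` is recovered from the smaller entries by undoing the relabelling.
-/

theorem IsLinExt.strictMono {P : Type*} [PartialOrder P] {n : ℕ} {T : P ≃ Fin n}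
    (hT : IsLinExt T) : StrictMono T :=
  Monotone.strictMono_of_injective (fun a b h => hT a b h) T.injective

namespace BarelySetValued

/-- Position `v` of a linear extension (counted from `0`) becomes a label in `{1, …, n+1}`
that avoids `i + 1`. -/
def shift (i v : ℕ) : ℕ := if v < i then v + 1 else v + 2

def unshift (i k : ℕ) : ℕ := if k ≤ i then k - 1 else k - 2

theorem shift_strictMono (i : ℕ) : StrictMono (shift i) := by
  intro v w h
  unfold shift
  split_ifs <;> omega

theorem shift_ne_succ (i v : ℕ) : shift i v ≠ i + 1 := by
  unfold shift
  split_ifs <;> omega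

theorem one_le_shift (i v : ℕ) : 1 ≤ shift i v := by
  unfold shift
  split_ifs <;> omega

theorem shift_lt_succ_iff {i v : ℕ} : shift i v < i + 1 ↔ v < i := by
  unfold shift
  split_ifs <;> omega

theorem succ_lt_shift_iff {i v : ℕ} : i + 1 < shift i v ↔ i ≤ v := by
  unfold shift
  split_ifs <;> omega

theorem shift_le_succ_iff {i n v : ℕ} (hi : i ≤ n) : shift i v ≤ n + 1 ↔ v < n := by
  unfold shift
  split_ifs <;> omega

theorem unshift_shift (i v : ℕ) : unshift i (shift i v) = v := by
  unfold shift unshift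
  split_ifs <;> omega

theorem shift_unshift {i k : ℕ} (hk : 1 ≤ k) (hne : k ≠ i + 1) :
    shift i (unshift i k) = k := by
  unfold shift unshift
  split_ifs <;> omega

section Forward

variable {P : Type*} {n : ℕ}

/-- `T` counts from `0`, so `{z | T z < i}` is the paper's `T⁻¹({1,…,i})`. -/
def IsMarkedLinExt [PartialOrder P] (T : P ≃ Fin n) (i : ℕ) (p : P) : Prop :=
  IsLinExt T ∧ i ≤ n ∧ (T p : ℕ) < i ∧ ∀ z : P, (T z : ℕ) < i → ¬ p < z

open Classical in
noncomputable def ofMarked (T : P ≃ Fin n) (i : ℕ) (p : P) (q : P) : Finset ℕ :=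
  if q = p then {shift i (T q), i + 1} else {shift i (T q)}

variable {T : P ≃ Fin n} {i : ℕ} {p : P}

theorem mem_ofMarked {q : P} {k : ℕ} :
    k ∈ ofMarked T i p q ↔ k = shift i (T q) ∨ q = p ∧ k = i + 1 := by
  unfold ofMarked
  split_ifs with h <;> simp [h]

theorem card_ofMarked_self : (ofMarked T i p p).card = 2 := by
  rw [ofMarked, if_pos rfl]
  exact Finset.card_pair (shift_ne_succ i _)

theorem card_ofMarked_of_ne {q : P} (hq : q ≠ p) : (ofMarked T i p q).card = 1 := by
  rw [ofMarked, if_neg hq]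
  exact Finset.card_singleton _

theorem mem_Icc_iff_exists_mem_ofMarked (hi : i ≤ n) (k : ℕ) :
    k ∈ Finset.Icc 1 (n + 1) ↔ ∃ q, k ∈ ofMarked T i p q := by
  simp only [Finset.mem_Icc, mem_ofMarked]
  constructor
  · rintro ⟨hk1, hkn⟩
    by_cases hki : k = i + 1
    · exact ⟨p, Or.inr ⟨rfl, hki⟩⟩
    have hshift := shift_unshift hk1 hki
    have hlt : unshift i k < n := (shift_le_succ_iff hi).mp (by rwa [hshift])
    refine ⟨T.symm ⟨unshift i k, hlt⟩, Or.inl ?_⟩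
    rw [Equiv.apply_symm_apply, hshift]
  · rintro ⟨q, rfl | ⟨-, rfl⟩⟩
    · exact ⟨one_le_shift i _, (shift_le_succ_iff hi).mpr (T q).isLt⟩
    · omega

theorem disjoint_ofMarked {q q' : P} (hne : q ≠ q') :
    Disjoint (ofMarked T i p q) (ofMarked T i p q') := by
  rw [Finset.disjoint_left]
  intro k hk hk'
  rw [mem_ofMarked] at hk hk'
  rcases hk with rfl | ⟨rfl, rfl⟩ <;> rcases hk' with h | ⟨rfl, h⟩
  · exact hne (T.injective (Fin.ext ((shift_strictMono i).injective h)))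
  · exact shift_ne_succ i _ h
  · exact shift_ne_succ i _ h.symm
  · exact hne rfl

theorem ofMarked_lt [PartialOrder P] (h : IsMarkedLinExt T i p) {q q' : P} (hlt : q < q') :
    ∀ a ∈ ofMarked T i p q, ∀ b ∈ ofMarked T i p q', a < b := by
  obtain ⟨hT, -, hp, hmax⟩ := h
  intro a ha b hb
  rw [mem_ofMarked] at ha hb
  rcases ha with rfl | ⟨rfl, rfl⟩ <;> rcases hb with rfl | ⟨rfl, rfl⟩
  · exact shift_strictMono i (IsLinExt.strictMono hT hlt)
  · exact shift_lt_succ_iff.mpr (lt_trans (IsLinExt.strictMono hT hlt) hp)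
  · exact succ_lt_shift_iff.mpr (not_lt.mp fun h => hmax q' h hlt)
  · exact absurd hlt (lt_irrefl _)

theorem isBSVLinExt_ofMarked [PartialOrder P] (h : IsMarkedLinExt T i p) :
    IsBSVLinExt n (ofMarked T i p) :=
  ⟨fun q => ⟨shift i (T q), mem_ofMarked.mpr (Or.inl rfl)⟩,
    mem_Icc_iff_exists_mem_ofMarked h.2.1,
    fun _ _ hne => disjoint_ofMarked hne,
    ⟨p, card_ofMarked_self, fun _ hq => card_ofMarked_of_ne hq⟩,
    fun _ _ hlt => ofMarked_lt h hlt⟩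

end Forward

end BarelySetValued

namespace IsBSVLinExt

open BarelySetValued

variable {P : Type*} [PartialOrder P] {n : ℕ} {S : P → Finset ℕ} (hS : IsBSVLinExt n S)

/-- The paper's `p*(S)`. -/
noncomputable def doubled : P := hS.2.2.2.1.choose

noncomputable def low (q : P) : ℕ := (S q).min' (hS.1 q)

/-- The paper's `i*(S) - 1`. -/
noncomputable def index : ℕ := (S hS.doubled).max' (hS.1 _) - 1

theorem card_doubled : (S hS.doubled).card = 2 := hS.2.2.2.1.choose_spec.1

theorem card_of_ne_doubled {q : P} (hq : q ≠ hS.doubled) : (S q).card = 1 :=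
  hS.2.2.2.1.choose_spec.2 q hq

theorem eq_doubled_of_card {q : P} (hq : (S q).card = 2) : q = hS.doubled := by
  by_contra hne
  rw [hS.card_of_ne_doubled hne] at hq
  omega

theorem mem_Icc (hS : IsBSVLinExt n S) {q : P} {k : ℕ} (hk : k ∈ S q) :
    1 ≤ k ∧ k ≤ n + 1 :=
  Finset.mem_Icc.mp ((hS.2.1 k).mpr ⟨q, hk⟩)

theorem low_mem (q : P) : hS.low q ∈ S q := Finset.min'_mem _ _

theorem index_succ_eq_max' : hS.index + 1 = (S hS.doubled).max' (hS.1 _) := by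
  have := hS.mem_Icc (Finset.max'_mem _ (hS.1 hS.doubled))
  unfold index
  omega

theorem index_succ_mem : hS.index + 1 ∈ S hS.doubled := by
  rw [index_succ_eq_max']
  exact Finset.max'_mem _ _

theorem index_le : hS.index ≤ n := by
  have := hS.mem_Icc hS.index_succ_mem
  omega

theorem low_doubled_lt : hS.low hS.doubled < hS.index + 1 := by
  rw [index_succ_eq_max']
  exact Finset.min'_lt_max'_of_card _ (by rw [card_doubled]; decide)

theorem eq_pair_doubled : S hS.doubled = {hS.low hS.doubled, hS.index + 1} := by
  refine (Finset.eq_of_subset_of_card_le ?_ ?_).symm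
  · exact Finset.insert_subset (hS.low_mem _) (Finset.singleton_subset_iff.mpr hS.index_succ_mem)
  · rw [hS.card_doubled, Finset.card_pair hS.low_doubled_lt.ne]

theorem eq_singleton_of_ne_doubled {q : P} (hq : q ≠ hS.doubled) : S q = {hS.low q} :=
  Finset.eq_singleton_iff_unique_mem.mpr ⟨hS.low_mem q, fun _ hk =>
    Finset.card_le_one.mp (hS.card_of_ne_doubled hq).le _ hk _ (hS.low_mem q)⟩

theorem mem_iff {q : P} {k : ℕ} :
    k ∈ S q ↔ k = hS.low q ∨ q = hS.doubled ∧ k = hS.index + 1 := by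
  by_cases hq : q = hS.doubled
  · subst hq
    rw [hS.eq_pair_doubled]
    simp
  · rw [hS.eq_singleton_of_ne_doubled hq]
    simp [hq]

theorem low_ne_index_succ (q : P) : hS.low q ≠ hS.index + 1 := by
  by_cases hq : q = hS.doubled
  · subst hq
    exact hS.low_doubled_lt.ne
  · intro h
    exact Finset.disjoint_left.mp (hS.2.2.1 q _ hq) (hS.low_mem q) (h ▸ hS.index_succ_mem)

theorem low_injective : Function.Injective hS.low := by
  intro q q' h
  by_contra hne
  exact Finset.disjoint_left.mp (hS.2.2.1 q q' hne) (hS.low_mem q) (h ▸ hS.low_mem q')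

theorem low_strictMono : StrictMono hS.low :=
  fun _ _ hlt => hS.2.2.2.2 _ _ hlt _ (hS.low_mem _) _ (hS.low_mem _)

theorem index_succ_lt_low {q : P} (hq : hS.doubled < q) : hS.index + 1 < hS.low q :=
  hS.2.2.2.2 _ _ hq _ hS.index_succ_mem _ (hS.low_mem q)

theorem shift_unshift_low (q : P) : shift hS.index (unshift hS.index (hS.low q)) = hS.low q :=
  shift_unshift (hS.mem_Icc (hS.low_mem q)).1 (hS.low_ne_index_succ q)

theorem unshift_low_lt (q : P) : unshift hS.index (hS.low q) < n := by
  rw [← shift_le_succ_iff hS.index_le, shift_unshift_low]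
  exact (hS.mem_Icc (hS.low_mem q)).2

section LinExt

variable [Fintype P] (hcard : Fintype.card P = n)

/-- The linear extension `T(S)`, counted from `0`. -/
noncomputable def linExt : P ≃ Fin n :=
  Equiv.ofBijective (fun q => ⟨unshift hS.index (hS.low q), hS.unshift_low_lt q⟩) <|
    (Fintype.bijective_iff_injective_and_card _).mpr
      ⟨fun q q' h => hS.low_injective <| by
        rw [← hS.shift_unshift_low q, ← hS.shift_unshift_low q']
        exact congrArg (fun v : Fin n => shift hS.index v) h,
        by simp [hcard]⟩

theorem shift_linExt (q : P) : shift hS.index (hS.linExt hcard q) = hS.low q :=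
  hS.shift_unshift_low q

theorem isMarkedLinExt_linExt : IsMarkedLinExt (hS.linExt hcard) hS.index hS.doubled := by
  refine ⟨fun q q' hle => ?_, hS.index_le, ?_, fun z hz hlt => ?_⟩
  · rw [← Fin.val_fin_le, ← (shift_strictMono hS.index).le_iff_le, shift_linExt, shift_linExt]
    exact hS.low_strictMono.monotone hle
  · rw [← shift_lt_succ_iff, shift_linExt]
    exact hS.low_doubled_lt
  · have := hS.index_succ_lt_low hlt
    rw [← hS.shift_linExt hcard, succ_lt_shift_iff] at this
    omega

theorem ofMarked_linExt : ofMarked (hS.linExt hcard) hS.index hS.doubled = S := by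
  funext q
  ext k
  rw [mem_ofMarked, shift_linExt, hS.mem_iff]

end LinExt

end IsBSVLinExt

namespace BarelySetValued

variable {P : Type*} [PartialOrder P] {n : ℕ}

section RoundTrip

variable {T : P ≃ Fin n} {i : ℕ} {p : P} (hS : IsBSVLinExt n (ofMarked T i p))

theorem doubled_ofMarked : hS.doubled = p :=
  (hS.eq_doubled_of_card card_ofMarked_self).symm

theorem low_ofMarked (hp : (T p : ℕ) < i) (q : P) : hS.low q = shift i (T q) := by
  refine le_antisymm (Finset.min'_le _ _ (mem_ofMarked.mpr (Or.inl rfl))) ?_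
  refine Finset.le_min' _ _ _ fun k hk => ?_
  rcases mem_ofMarked.mp hk with rfl | ⟨rfl, rfl⟩
  · exact le_rfl
  · exact (shift_lt_succ_iff.mpr hp).le

theorem index_ofMarked (hp : (T p : ℕ) < i) : hS.index = i := by
  have hmem := hS.index_succ_mem
  rw [doubled_ofMarked, mem_ofMarked] at hmem
  have hlow := hS.low_ne_index_succ p
  rw [low_ofMarked hS hp] at hlow
  omega

theorem linExt_ofMarked [Fintype P] (hcard : Fintype.card P = n) (hp : (T p : ℕ) < i) :
    hS.linExt hcard = T := by
  ext q
  change unshift hS.index (hS.low q) = T q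
  rw [low_ofMarked hS hp, index_ofMarked hS hp, unshift_shift]

end RoundTrip

noncomputable def equivMarked [Fintype P] (hcard : Fintype.card P = n) :
    {S : P → Finset ℕ // IsBSVLinExt n S} ≃
      {x : (P ≃ Fin n) × ℕ × P // IsMarkedLinExt x.1 x.2.1 x.2.2} where
  toFun S := ⟨(S.2.linExt hcard, S.2.index, S.2.doubled), S.2.isMarkedLinExt_linExt hcard⟩
  invFun x := ⟨ofMarked x.1.1 x.1.2.1 x.1.2.2, isBSVLinExt_ofMarked x.2⟩
  left_inv S := Subtype.ext (S.2.ofMarked_linExt hcard)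
  right_inv := fun ⟨(_, _, _), h⟩ =>
    have hS := isBSVLinExt_ofMarked h
    Subtype.ext <| Prod.ext (linExt_ofMarked hS hcard h.2.2.1)
      (Prod.ext (index_ofMarked hS h.2.2.1) (doubled_ofMarked hS))

end BarelySetValued

/-- barely set-valued linear extensions of `P` are in bijection with
triples `(T, i, p)` where `T` is a linear extension, `i ∈ {0,…,n}`, and `p` is a
maximal element of the order ideal `T⁻¹({1,…,i})`. -/
theorem stmt_3 {P : Type*} [Fintype P] [PartialOrder P] (n : ℕ)
    (hcard : Fintype.card P = n) :
    Nonempty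
      ({S : P → Finset ℕ // IsBSVLinExt n S} ≃
        {x : (P ≃ Fin n) × ℕ × P //
          IsLinExt x.1 ∧ x.2.1 ≤ n ∧
          (x.1 x.2.2 : ℕ) < x.2.1 ∧ ∀ z : P, (x.1 z : ℕ) < x.2.1 → ¬ x.2.2 < z}) :=
  ⟨BarelySetValued.equivMarked hcard⟩
end

section
/- For any finite poset P with n elements and any m ≥ 1, there is a bijection between barely set-valued reverse P-partitions with entries in {0,...,m} and triples (π, i, p) where π is a reverse P-partition with values in {0,...,m}, i ∈ {0,1,...,m-1}, and p is a maximal element of the order ideal π⁻¹({0,1,...,i}). -/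
/-- A barely set-valued reverse `P`-partition with entries in `{0,…,m}`:
every box has a nonempty set of entries contained in `{0,…,m}`, exactly one box has a
doubleton while the rest are singletons, and `max τ(p) ≤ min τ(q)` whenever `p < q`. -/
def IsBSVRPP {P : Type*} [PartialOrder P] (m : ℕ) (τ : P → Finset ℕ) : Prop :=
  (∀ p, (τ p).Nonempty) ∧
  (∀ p, ∀ k ∈ τ p, k ≤ m) ∧
  (∃ p₀, (τ p₀).card = 2 ∧ ∀ p, p ≠ p₀ → (τ p).card = 1) ∧
  (∀ p q, p < q → ∀ a ∈ τ p, ∀ b ∈ τ q, a ≤ b)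

/-!
A barely set-valued reverse `P`-partition `τ` is determined by its minima `π p = min τ(p)`, its
doubleton box `p*` and the larger entry `j = max τ(p*)`: `τ` is the singleton partition `{π p}`
with `j` added at `p*`. Conversely, adding `j` at `p*` to a reverse `P`-partition `π` gives a
barely set-valued one exactly when `π p* < j ≤ π q` for every `q > p*`, i.e. when `p*` is maximal
in the order ideal `π⁻¹({0, …, j - 1})`. The triple records `i = j - 1`,
with no truncation since `j > π p* ≥ 0`.
-/

theorem Finset.eq_pair_min'_max'_of_card_eq_two {α : Type*} [LinearOrder α] {s : Finset α}
    (hs : s.card = 2) (hne : s.Nonempty) : s = {s.min' hne, s.max' hne} := by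
  have hlt : s.min' hne < s.max' hne := Finset.min'_lt_max'_of_card s (by omega)
  refine (Finset.eq_of_subset_of_card_le ?_ ?_).symm
  · simp [Finset.insert_subset_iff, Finset.min'_mem, Finset.max'_mem]
  · rw [hs, Finset.card_pair hlt.ne]

section

variable {P : Type*} {m : ℕ}

section OfTriple

variable [DecidableEq P] {π : P → ℕ} {j : ℕ} {p₀ p : P}

def ofTriple (π : P → ℕ) (j : ℕ) (p₀ : P) : P → Finset ℕ :=
  Function.update (fun p => {π p}) p₀ {π p₀, j}

theorem mem_ofTriple {k : ℕ} : k ∈ ofTriple π j p₀ p ↔ k = π p ∨ p = p₀ ∧ k = j := by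
  rcases eq_or_ne p p₀ with rfl | hp <;> simp [ofTriple, Function.update_of_ne, *]

theorem ofTriple_nonempty : (ofTriple π j p₀ p).Nonempty := ⟨π p, mem_ofTriple.2 (.inl rfl)⟩

theorem card_ofTriple_self (h : π p₀ ≠ j) : (ofTriple π j p₀ p₀).card = 2 := by
  simp [ofTriple, Finset.card_pair h]

theorem card_ofTriple_of_ne (hp : p ≠ p₀) : (ofTriple π j p₀ p).card = 1 := by
  simp [ofTriple, Function.update_of_ne hp]

theorem min'_ofTriple (h : π p₀ ≤ j) : (ofTriple π j p₀ p).min' ofTriple_nonempty = π p :=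
  le_antisymm (Finset.min'_le _ _ (mem_ofTriple.2 (.inl rfl))) <|
    Finset.le_min' _ _ _ fun k hk => by rcases mem_ofTriple.1 hk with rfl | ⟨rfl, rfl⟩ <;> omega

theorem max'_ofTriple_self (h : π p₀ ≤ j) : (ofTriple π j p₀ p₀).max' ofTriple_nonempty = j :=
  le_antisymm
    (Finset.max'_le _ _ _ fun k hk => by rcases mem_ofTriple.1 hk with rfl | ⟨-, rfl⟩ <;> omega)
    (Finset.le_max' _ _ (mem_ofTriple.2 (.inr ⟨rfl, rfl⟩)))

theorem isBSVRPP_ofTriple [PartialOrder P] (hmono : Monotone π) (hπm : ∀ p, π p ≤ m)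
    (hjm : j ≤ m) (hlt : π p₀ < j) (hmax : ∀ q, π q < j → ¬ p₀ < q) :
    IsBSVRPP m (ofTriple π j p₀) := by
  refine ⟨fun _ => ofTriple_nonempty, fun p k hk => ?_,
    ⟨p₀, card_ofTriple_self hlt.ne, fun _ => card_ofTriple_of_ne⟩, fun p q hpq a ha b hb => ?_⟩
  · rcases mem_ofTriple.1 hk with rfl | ⟨-, rfl⟩
    exacts [hπm p, hjm]
  · have hπpq := hmono hpq.le
    rcases mem_ofTriple.1 ha with rfl | ⟨rfl, rfl⟩ <;>
      rcases mem_ofTriple.1 hb with rfl | ⟨rfl, rfl⟩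
    · exact hπpq
    · omega
    · exact not_lt.1 fun h => hmax q h hpq
    · exact absurd hpq (lt_irrefl _)

end OfTriple

namespace IsBSVRPP

variable [PartialOrder P] {τ : P → Finset ℕ} (h : IsBSVRPP m τ)

noncomputable def doubleton : P := h.2.2.1.choose

theorem card_doubleton : (τ h.doubleton).card = 2 := h.2.2.1.choose_spec.1

theorem card_eq_one_of_ne_doubleton {p : P} (hp : p ≠ h.doubleton) : (τ p).card = 1 :=
  h.2.2.1.choose_spec.2 p hp

theorem eq_doubleton_of_card_eq_two {p : P} (hp : (τ p).card = 2) : p = h.doubleton :=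
  not_not.1 fun hne => by have := h.card_eq_one_of_ne_doubleton hne; omega

noncomputable def low (p : P) : ℕ := (τ p).min' (h.1 p)

noncomputable def top : ℕ := (τ h.doubleton).max' (h.1 _)

theorem low_mem (p : P) : h.low p ∈ τ p := Finset.min'_mem _ _

theorem top_mem : h.top ∈ τ h.doubleton := Finset.max'_mem _ _

theorem low_le (p : P) : h.low p ≤ m := h.2.1 p _ (h.low_mem p)

theorem top_le : h.top ≤ m := h.2.1 _ _ h.top_mem

theorem low_doubleton_lt_top : h.low h.doubleton < h.top :=
  Finset.min'_lt_max'_of_card _ (by rw [h.card_doubleton]; omega)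

theorem monotone_low : Monotone h.low := fun p q hpq => by
  rcases hpq.eq_or_lt with rfl | hlt
  exacts [le_rfl, h.2.2.2 p q hlt _ (h.low_mem p) _ (h.low_mem q)]

theorem top_le_low_of_doubleton_lt {q : P} (hq : h.doubleton < q) : h.top ≤ h.low q :=
  h.2.2.2 _ q hq _ h.top_mem _ (h.low_mem q)

theorem ofTriple_low_top_doubleton [DecidableEq P] : ofTriple h.low h.top h.doubleton = τ := by
  funext p
  rcases eq_or_ne p h.doubleton with rfl | hp
  · rw [Finset.eq_pair_min'_max'_of_card_eq_two h.card_doubleton (h.1 _)]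
    simp [ofTriple, low, top]
  · obtain ⟨a, ha⟩ := Finset.card_eq_one.1 (h.card_eq_one_of_ne_doubleton hp)
    simp [ofTriple, Function.update_of_ne hp, low, ha]

end IsBSVRPP

section

variable [PartialOrder P] [DecidableEq P] {π : P → ℕ} {j : ℕ} {p₀ : P}

theorem IsBSVRPP.doubleton_ofTriple (h : IsBSVRPP m (ofTriple π j p₀)) (hlt : π p₀ < j) :
    h.doubleton = p₀ :=
  (h.eq_doubleton_of_card_eq_two (card_ofTriple_self hlt.ne)).symm

theorem IsBSVRPP.low_ofTriple (h : IsBSVRPP m (ofTriple π j p₀)) (hle : π p₀ ≤ j) : h.low = π :=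
  funext fun _ => min'_ofTriple hle

theorem IsBSVRPP.top_ofTriple (h : IsBSVRPP m (ofTriple π j p₀)) (hlt : π p₀ < j) :
    h.top = j := by
  simp only [top, h.doubleton_ofTriple hlt, max'_ofTriple_self hlt.le]

end

end

theorem stmt_4_general {P : Type*} [PartialOrder P] (m : ℕ) :
    Nonempty
      ({τ : P → Finset ℕ // IsBSVRPP m τ} ≃
        {x : (P → ℕ) × ℕ × P //
          Monotone x.1 ∧ (∀ p, x.1 p ≤ m) ∧ x.2.1 < m ∧
          x.1 x.2.2 ≤ x.2.1 ∧ ∀ z : P, x.1 z ≤ x.2.1 → ¬ x.2.2 < z}) := by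
  classical
  refine ⟨{
    toFun := fun ⟨τ, h⟩ =>
      have hlt := h.low_doubleton_lt_top
      ⟨(h.low, h.top - 1, h.doubleton), h.monotone_low, h.low_le,
        show h.top - 1 < m by have := h.top_le; omega,
        show h.low h.doubleton ≤ h.top - 1 by omega,
        fun q (hq : h.low q ≤ h.top - 1) hdq => by
          have := h.top_le_low_of_doubleton_lt hdq; omega⟩
    invFun := fun ⟨(π, i, p₀), hmono, hπm, (him : i < m), (hle : π p₀ ≤ i),
        (hmax : ∀ q, π q ≤ i → ¬ p₀ < q)⟩ =>
      ⟨ofTriple π (i + 1) p₀, isBSVRPP_ofTriple hmono hπm him (by omega)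
        fun q hq => hmax q (by omega)⟩
    left_inv := fun ⟨τ, h⟩ => Subtype.ext <| by
      simpa [Nat.sub_add_cancel (Nat.one_le_of_lt h.low_doubleton_lt_top)]
        using h.ofTriple_low_top_doubleton
    right_inv := fun ⟨(π, i, p₀), _, _, _, (hle : π p₀ ≤ i), _⟩ => Subtype.ext <| by
      have hlt : π p₀ < i + 1 := Nat.lt_succ_of_le hle
      dsimp only
      rw [IsBSVRPP.low_ofTriple _ hlt.le, IsBSVRPP.top_ofTriple _ hlt,
        IsBSVRPP.doubleton_ofTriple _ hlt, Nat.add_sub_cancel] }⟩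

/-- for any `m ≥ 1`, barely set-valued reverse `P`-partitions with entries
in `{0,…,m}` are in bijection with triples `(π, i, p)` where `π : P → {0,…,m}` is
order-preserving, `i ∈ {0,…,m-1}`, and `p` is a maximal element of the order ideal
`π⁻¹({0,…,i})`. -/
theorem stmt_4 {P : Type*} [Fintype P] [PartialOrder P] (m : ℕ) (hm : 1 ≤ m) :
    Nonempty
      ({τ : P → Finset ℕ // IsBSVRPP m τ} ≃
        {x : (P → ℕ) × ℕ × P //
          Monotone x.1 ∧ (∀ p, x.1 p ≤ m) ∧ x.2.1 < m ∧
          x.1 x.2.2 ≤ x.2.1 ∧ ∀ z : P, x.1 z ≤ x.2.1 → ¬ x.2.2 < z}) :=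
  stmt_4_general m
end

section
/- The number of standard barely set-valued Young tableaux of rectangular shape a×b equals (ab/(a+b)) · (ab+1) times the number of standard Young tableaux of shape a×b. -/
/-!
A barely set-valued tableau is a linear extension `T` of the `a × b` grid, relabelled by
`1, …, ab + 1` with `k + 1` skipped, in which the label `k + 1` is added to a box `p` that is
maximal in the order ideal `{q | T q < k}`. Call such `(T, p, k)` removable, and addable when `p`
is instead minimal outside that ideal. Moving `p` to position `k` of `T` turns addable triples
into removable ones and back, keeping `p`, so every weight on boxes has the same total over both.

Weight a lattice point `(i, j)` by `ab - bi - aj`, the affine function vanishing at `(a, 0)` and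
`(0, b)`. For any Young diagram inside the rectangle, the addable cells weighted at their
north-west corner minus the removable cells weighted at their south-east corner telescope row by
row to `ab`. The two corners of a box differ by `a + b`, so summing over `T` and `k ≤ ab` gives
`(a + b) · #BSVT = ab (ab + 1) · #SYT`.
-/

/-- A standard Young tableau of rectangular shape `a×b`, encoded as an order-preserving
bijection from the grid poset `Fin a × Fin b` (componentwise order) to `Fin (a*b)`. -/
def IsSYT (a b : ℕ) (T : Fin a × Fin b ≃ Fin (a * b)) : Prop :=
  ∀ p q : Fin a × Fin b, p ≤ q → T p ≤ T q

/-- A standard barely set-valued tableau of shape `a×b`: the entries are nonempty sets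
partitioning `{1,…,ab+1}`, exactly one box has two numbers and all others one, and
entries strictly increase to the southeast (`max < min` along the grid order). -/
def IsBSVT (a b : ℕ) (S : Fin a × Fin b → Finset ℕ) : Prop :=
  (∀ p, (S p).Nonempty) ∧
  (∀ k, k ∈ Finset.Icc 1 (a * b + 1) ↔ ∃ p, k ∈ S p) ∧
  (∀ p q, p ≠ q → Disjoint (S p) (S q)) ∧
  (∃ p₀, (S p₀).card = 2 ∧ ∀ p, p ≠ p₀ → (S p).card = 1) ∧
  (∀ p q, p < q → ∀ x ∈ S p, ∀ y ∈ S q, x < y)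

namespace BarelySetValued

open Finset
open scoped Classical

noncomputable section

-- The new position of the item at position `v` when the item at position `i` is moved to `j`.
def relocate (i j v : ℕ) : ℕ :=
  if v = i then j else if i < v ∧ v ≤ j then v - 1 else if j ≤ v ∧ v < i then v + 1 else v

theorem relocate_self (i j : ℕ) : relocate i j i = j := if_pos rfl

theorem relocate_relocate (i j v : ℕ) : relocate j i (relocate i j v) = v := by
  unfold relocate; split_ifs <;> omega

theorem relocate_lt {n i j v : ℕ} (hi : i < n) (hj : j < n) (hv : v < n) :
    relocate i j v < n := by
  unfold relocate; split_ifs <;> omega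

def relocatePerm {n : ℕ} (i j : Fin n) : Equiv.Perm (Fin n) where
  toFun v := ⟨relocate i j v, relocate_lt i.isLt j.isLt v.isLt⟩
  invFun v := ⟨relocate j i v, relocate_lt j.isLt i.isLt v.isLt⟩
  left_inv v := Fin.ext (relocate_relocate i j v)
  right_inv v := Fin.ext (relocate_relocate j i v)

section LinearExtension

variable {P : Type*} {n : ℕ}

def moveTo (T : P ≃ Fin n) (p : P) (j : Fin n) : P ≃ Fin n :=
  T.trans (relocatePerm (T p) j)

theorem moveTo_apply (T : P ≃ Fin n) (p : P) (j : Fin n) (q : P) :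
    (moveTo T p j q : ℕ) = relocate (T p) j (T q) := rfl

@[simp]
theorem moveTo_apply_self (T : P ≃ Fin n) (p : P) (j : Fin n) : moveTo T p j p = j :=
  Fin.ext (relocate_self _ _)

theorem moveTo_moveTo (T : P ≃ Fin n) (p : P) (j : Fin n) :
    moveTo (moveTo T p j) p (T p) = T := by
  ext q
  simp only [moveTo_apply, relocate_self, relocate_relocate]

variable [PartialOrder P]

theorem monotone_moveTo {T : P ≃ Fin n} (hT : Monotone T) {p : P} {j : Fin n}
    (hlo : ∀ q < p, T q < j) (hhi : ∀ q, p < q → j < T q) : Monotone (moveTo T p j) := by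
  refine StrictMono.monotone fun u v huv => ?_
  have hTuv : T u < T v := hT.strictMono_of_injective T.injective huv
  rw [Fin.lt_def, moveTo_apply, moveTo_apply]
  rw [Fin.lt_def] at hTuv
  by_cases hu : u = p
  · subst hu
    have := Fin.lt_def.mp (hhi v huv)
    unfold relocate; split_ifs <;> omega
  by_cases hv : v = p
  · subst hv
    have := Fin.lt_def.mp (hlo u huv)
    unfold relocate; split_ifs <;> omega
  have hu' := Fin.val_injective.ne (T.injective.ne hu)
  have hv' := Fin.val_injective.ne (T.injective.ne hv)
  unfold relocate; split_ifs <;> omega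

variable [Fintype P]

def linearExtensions (P : Type*) [PartialOrder P] [Fintype P] (n : ℕ) : Finset (P ≃ Fin n) :=
  univ.filter fun T => Monotone T

theorem mem_linearExtensions {T : P ≃ Fin n} : T ∈ linearExtensions P n ↔ Monotone T := by
  simp [linearExtensions]

theorem card_linearExtensions :
    Nat.card {T : P ≃ Fin n // Monotone T} = #(linearExtensions P n) := by
  rw [Nat.card_eq_fintype_card, Fintype.card_subtype, linearExtensions]

def extensionTriples (P : Type*) [PartialOrder P] [Fintype P] (n : ℕ)
    (C : (P ≃ Fin n) → P → ℕ → Prop) : Finset ((P ≃ Fin n) × P × ℕ) :=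
  (linearExtensions P n ×ˢ univ ×ˢ range (n + 1)).filter fun x => C x.1 x.2.1 x.2.2

abbrev addableTriples (P : Type*) [PartialOrder P] [Fintype P] (n : ℕ) :
    Finset ((P ≃ Fin n) × P × ℕ) :=
  extensionTriples P n fun T p k => Minimal (fun q => ¬ (T q : ℕ) < k) p

abbrev removableTriples (P : Type*) [PartialOrder P] [Fintype P] (n : ℕ) :
    Finset ((P ≃ Fin n) × P × ℕ) :=
  extensionTriples P n fun T p k => Maximal (fun q => (T q : ℕ) < k) p

theorem mem_extensionTriples {C : (P ≃ Fin n) → P → ℕ → Prop} {T : P ≃ Fin n} {p : P} {k : ℕ} :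
    (T, p, k) ∈ extensionTriples P n C ↔ Monotone T ∧ k ≤ n ∧ C T p k := by
  simp [extensionTriples, linearExtensions, and_assoc]

theorem sum_extensionTriples {M : Type*} [AddCommMonoid M] (C : (P ≃ Fin n) → P → ℕ → Prop)
    (f : P → M) :
    ∑ x ∈ extensionTriples P n C, f x.2.1
      = ∑ T ∈ linearExtensions P n, ∑ k ∈ range (n + 1), ∑ p with C T p k, f p := by
  simp only [extensionTriples, sum_filter, sum_product]
  refine sum_congr rfl fun T _ => ?_
  rw [sum_comm]

theorem lt_of_mem_addableTriples {T : P ≃ Fin n} {p : P} {k : ℕ}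
    (h : (T, p, k) ∈ addableTriples P n) : k < n :=
  lt_of_le_of_lt (not_lt.mp (mem_extensionTriples.mp h).2.2.prop) (T p).isLt

theorem sub_one_lt_of_mem_removableTriples {T : P ≃ Fin n} {p : P} {k : ℕ}
    (h : (T, p, k) ∈ removableTriples P n) : k - 1 < n := by
  have := (mem_extensionTriples.mp h).2.1
  have := (mem_extensionTriples.mp h).2.2.prop
  omega

theorem moveTo_mem_removableTriples {T : P ≃ Fin n} {p : P} {k : ℕ}
    (h : (T, p, k) ∈ addableTriples P n) :
    (moveTo T p ⟨k, lt_of_mem_addableTriples h⟩, p, (T p : ℕ) + 1) ∈ removableTriples P n := by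
  obtain ⟨hT, -, hkp, hlo⟩ :=
    mem_extensionTriples.mp h |>.imp_right (And.imp_right minimal_iff_forall_lt.mp)
  have hT' := hT.strictMono_of_injective T.injective
  simp only [not_lt, not_le] at hkp hlo
  refine mem_extensionTriples.mpr ⟨?_, (T p).isLt, maximal_iff_forall_gt.mpr ⟨?_, fun q hq => ?_⟩⟩
  · exact monotone_moveTo hT hlo fun q hq => lt_of_le_of_lt hkp (hT' hq)
  · rw [moveTo_apply, relocate_self, Fin.val_mk]; omega
  · have := Fin.lt_def.mp (hT' hq)
    simp only [moveTo_apply, relocate]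
    split_ifs <;> omega

theorem moveTo_mem_addableTriples {T : P ≃ Fin n} {p : P} {k : ℕ}
    (h : (T, p, k) ∈ removableTriples P n) :
    (moveTo T p ⟨k - 1, sub_one_lt_of_mem_removableTriples h⟩, p, (T p : ℕ)) ∈
      addableTriples P n := by
  obtain ⟨hT, hkn, hpk, hhi⟩ :=
    mem_extensionTriples.mp h |>.imp_right (And.imp_right maximal_iff_forall_gt.mp)
  have hT' := hT.strictMono_of_injective T.injective
  simp only [not_lt] at hhi
  refine mem_extensionTriples.mpr ⟨?_, by omega, minimal_iff_forall_lt.mpr ⟨?_, fun q hq => ?_⟩⟩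
  · refine monotone_moveTo hT (fun q hq => ?_) fun q hq => ?_
    · have := Fin.lt_def.mp (hT' hq)
      show (T q : ℕ) < k - 1
      omega
    · have := hhi hq
      show k - 1 < (T q : ℕ)
      omega
  · rw [moveTo_apply, relocate_self, Fin.val_mk]; omega
  · have := Fin.lt_def.mp (hT' hq)
    simp only [moveTo_apply, relocate]
    split_ifs <;> omega

theorem sum_addableTriples_eq_sum_removableTriples {M : Type*} [AddCommMonoid M] (f : P → M) :
    ∑ x ∈ addableTriples P n, f x.2.1 = ∑ x ∈ removableTriples P n, f x.2.1 :=
  sum_bij'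
    (fun x hx => (moveTo x.1 x.2.1 ⟨x.2.2, lt_of_mem_addableTriples hx⟩, x.2.1, x.1 x.2.1 + 1))
    (fun x hx =>
      (moveTo x.1 x.2.1 ⟨x.2.2 - 1, sub_one_lt_of_mem_removableTriples hx⟩, x.2.1, x.1 x.2.1))
    (fun _ hx => moveTo_mem_removableTriples hx) (fun _ hx => moveTo_mem_addableTriples hx)
    (fun _ _ => by simp [moveTo_moveTo]) (fun ⟨_, _, _⟩ hx => by
      have := (mem_extensionTriples.mp hx).2.2.prop
      simp only [moveTo_apply_self, Fin.eta, moveTo_moveTo, Prod.mk.injEq, true_and]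
      omega)
    fun _ _ => rfl

end LinearExtension

theorem exists_equiv_fin_of_injective {P : Type*} [Fintype P] {n : ℕ} (hP : Fintype.card P = n)
    {f : P → ℕ} (hf : Function.Injective f) (hlt : ∀ q, f q < n) :
    ∃ T : P ≃ Fin n, ∀ q, (T q : ℕ) = f q :=
  ⟨Equiv.ofBijective (fun q => ⟨f q, hlt q⟩) ((Fintype.bijective_iff_injective_and_card _).mpr
    ⟨fun q q' h => hf (congrArg Fin.val h), by simp [hP]⟩), fun _ => rfl⟩

-- Turns the labels `0, …, n - 1` of a linear extension into `1, …, n + 1` without `k + 1`.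
def skipLabel (k v : ℕ) : ℕ := if v < k then v + 1 else v + 2

def unskipLabel (k m : ℕ) : ℕ := if m ≤ k then m - 1 else m - 2

theorem skipLabel_ne (k v : ℕ) : skipLabel k v ≠ k + 1 := by
  unfold skipLabel; split_ifs <;> omega

theorem skipLabel_strictMono (k : ℕ) : StrictMono (skipLabel k) := fun v w h => by
  unfold skipLabel; split_ifs <;> omega

theorem skipLabel_lt_succ_iff {k v : ℕ} : skipLabel k v < k + 1 ↔ v < k := by
  unfold skipLabel; split_ifs <;> omega

theorem succ_lt_skipLabel_iff {k v : ℕ} : k + 1 < skipLabel k v ↔ k ≤ v := by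
  unfold skipLabel; split_ifs <;> omega

theorem skipLabel_unskipLabel {k m : ℕ} (h1 : 1 ≤ m) (hk : m ≠ k + 1) :
    skipLabel k (unskipLabel k m) = m := by
  unfold skipLabel unskipLabel; split_ifs <;> omega

section SetValued

variable {P : Type*} {n : ℕ}

def toSetValued (x : (P ≃ Fin n) × P × ℕ) (q : P) : Finset ℕ :=
  if q = x.2.1 then {skipLabel x.2.2 (x.1 q), x.2.2 + 1} else {skipLabel x.2.2 (x.1 q)}

theorem mem_toSetValued {T : P ≃ Fin n} {p q : P} {k m : ℕ} :
    m ∈ toSetValued (T, p, k) q ↔ m = skipLabel k (T q) ∨ (q = p ∧ m = k + 1) := by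
  unfold toSetValued
  split_ifs with h <;> simp [h]

theorem card_toSetValued (T : P ≃ Fin n) (p q : P) (k : ℕ) :
    (toSetValued (T, p, k) q).card = if q = p then 2 else 1 := by
  unfold toSetValued
  split_ifs
  · exact card_pair (skipLabel_ne k _)
  · exact card_singleton _

variable [PartialOrder P]

def IsBarelySetValued (n : ℕ) (S : P → Finset ℕ) : Prop :=
  (∀ p, (S p).Nonempty) ∧
  (∀ k, k ∈ Finset.Icc 1 (n + 1) ↔ ∃ p, k ∈ S p) ∧
  (∀ p q, p ≠ q → Disjoint (S p) (S q)) ∧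
  (∃ p₀, (S p₀).card = 2 ∧ ∀ p, p ≠ p₀ → (S p).card = 1) ∧
  (∀ p q, p < q → ∀ x ∈ S p, ∀ y ∈ S q, x < y)

theorem isBarelySetValued_toSetValued {T : P ≃ Fin n} {p : P} {k : ℕ}
    [Fintype P] (h : (T, p, k) ∈ removableTriples P n) :
    IsBarelySetValued n (toSetValued (T, p, k)) := by
  obtain ⟨hT, hkn, hpk, hhi⟩ :=
    mem_extensionTriples.mp h |>.imp_right (And.imp_right maximal_iff_forall_gt.mp)
  have hT' := hT.strictMono_of_injective T.injective
  refine ⟨fun q => ⟨_, mem_toSetValued.mpr (Or.inl rfl)⟩, fun m => ⟨fun hm => ?_, ?_⟩,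
    fun u v huv => disjoint_left.mpr fun m hu hv => ?_,
    ⟨p, by simp [card_toSetValued], fun q hq => by simp [card_toSetValued, hq]⟩,
    fun u v huv m hu m' hv => ?_⟩
  · rw [mem_Icc] at hm
    by_cases hmk : m = k + 1
    · exact ⟨p, mem_toSetValued.mpr (Or.inr ⟨rfl, hmk⟩)⟩
    · have hlt : unskipLabel k m < n := by unfold unskipLabel; split_ifs <;> omega
      refine ⟨T.symm ⟨_, hlt⟩, mem_toSetValued.mpr (Or.inl ?_)⟩
      rw [T.apply_symm_apply, Fin.val_mk, skipLabel_unskipLabel hm.1 hmk]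
  · rintro ⟨q, hq⟩
    have := (T q).isLt
    rw [mem_Icc]
    rcases mem_toSetValued.mp hq with rfl | ⟨-, rfl⟩
    · unfold skipLabel; split_ifs <;> omega
    · omega
  · rcases mem_toSetValued.mp hu with rfl | ⟨rfl, rfl⟩ <;>
      rcases mem_toSetValued.mp hv with e | ⟨rfl, e⟩
    · exact huv (T.injective (Fin.val_injective ((skipLabel_strictMono k).injective e)))
    · exact skipLabel_ne k _ e
    · exact skipLabel_ne k _ e.symm
    · exact huv rfl
  · have huv' : (T u : ℕ) < T v := hT' huv
    rcases mem_toSetValued.mp hu with rfl | ⟨rfl, rfl⟩ <;>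
      rcases mem_toSetValued.mp hv with rfl | ⟨rfl, rfl⟩
    · exact skipLabel_strictMono k huv'
    · exact skipLabel_lt_succ_iff.mpr (huv'.trans hpk)
    · exact succ_lt_skipLabel_iff.mpr (not_lt.mp (hhi huv))
    · exact absurd huv (lt_irrefl _)

theorem toSetValued_injOn [Fintype P] :
    Set.InjOn toSetValued (removableTriples P n : Set ((P ≃ Fin n) × P × ℕ)) := by
  rintro ⟨T, p, k⟩ hx ⟨T', p', k'⟩ hx' hS
  have hp : p = p' := by
    simpa [card_toSetValued] using congrArg (fun S => (S p).card) hS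
  subst hp
  have hmax : ∀ {T : P ≃ Fin n} {k}, (T, p, k) ∈ removableTriples P n →
      ∀ m ∈ toSetValued (T, p, k) p, m ≤ k + 1 := fun {T k} h m hm => by
    rcases mem_toSetValued.mp hm with rfl | ⟨-, rfl⟩
    · exact (skipLabel_lt_succ_iff.mpr (mem_extensionTriples.mp h).2.2.prop).le
    · rfl
  have hextra : ∀ {T : P ≃ Fin n} {k}, k + 1 ∈ toSetValued (T, p, k) p :=
    mem_toSetValued.mpr (Or.inr ⟨rfl, rfl⟩)
  have hk : k = k' := by
    have := hmax hx' _ (hS ▸ hextra : k + 1 ∈ toSetValued (T', p, k') p)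
    have := hmax hx _ (hS ▸ hextra : k' + 1 ∈ toSetValued (T, p, k) p)
    omega
  subst hk
  refine Prod.ext (Equiv.ext fun q => Fin.val_injective ((skipLabel_strictMono k).injective ?_)) rfl
  have hq : skipLabel k (T q) ∈ toSetValued (T', p, k) q := hS ▸ mem_toSetValued.mpr (Or.inl rfl)
  exact (mem_toSetValued.mp hq).resolve_right fun h => skipLabel_ne k _ h.2

theorem exists_monotone_skipLabel_eq [Fintype P] (hP : Fintype.card P = n) {k : ℕ} (hk : k ≤ n)
    {lo : P → ℕ} (hlo : ∀ q, 1 ≤ lo q ∧ lo q ≤ n + 1 ∧ lo q ≠ k + 1)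
    (hinj : Function.Injective lo) (hmono : StrictMono lo) :
    ∃ T : P ≃ Fin n, Monotone T ∧ ∀ q, skipLabel k (T q) = lo q := by
  have hskip : ∀ q, skipLabel k (unskipLabel k (lo q)) = lo q := fun q =>
    skipLabel_unskipLabel (hlo q).1 (hlo q).2.2
  obtain ⟨T, hT⟩ := exists_equiv_fin_of_injective hP (f := fun q => unskipLabel k (lo q))
    (fun q q' h => hinj (by simpa [hskip] using congrArg (skipLabel k) h))
    (fun q => by have := hlo q; unfold unskipLabel; split_ifs <;> omega)
  refine ⟨T, StrictMono.monotone fun q q' h => ?_, fun q => by rw [hT, hskip]⟩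
  rw [Fin.lt_def, hT, hT, ← (skipLabel_strictMono k).lt_iff_lt, hskip, hskip]
  exact hmono h

theorem exists_toSetValued_eq [Fintype P] (hP : Fintype.card P = n) {S : P → Finset ℕ}
    (hS : IsBarelySetValued n S) : ∃ x ∈ removableTriples P n, toSetValued x = S := by
  obtain ⟨hne, hcover, hdisj, ⟨p, hp2, hp1⟩, hlt⟩ := hS
  have hbound : ∀ q, ∀ m ∈ S q, 1 ≤ m ∧ m ≤ n + 1 := fun q m hm =>
    mem_Icc.mp ((hcover m).mpr ⟨q, hm⟩)
  set lo : P → ℕ := fun q => (S q).min' (hne q)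
  set k := (S p).max' (hne p) - 1
  have hlo_mem : ∀ q, lo q ∈ S q := fun q => min'_mem _ _
  have hk_mem : k + 1 ∈ S p := by
    have := hbound p _ (max'_mem _ (hne p))
    rw [show k + 1 = (S p).max' (hne p) by omega]; exact max'_mem _ _
  have hlo_p : lo p < k + 1 := by
    have := min'_lt_max'_of_card (S p) (by omega)
    show (S p).min' _ < (S p).max' _ - 1 + 1
    omega
  clear_value lo k
  have hS_p : S p = {lo p, k + 1} :=
    (eq_of_subset_of_card_le (insert_subset (hlo_mem p) (singleton_subset_iff.mpr hk_mem))
      (by rw [hp2, card_pair hlo_p.ne])).symm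
  have hS_q : ∀ q, q ≠ p → S q = {lo q} := fun q hq => by
    obtain ⟨m, hm⟩ := card_eq_one.mp (hp1 q hq)
    have := hlo_mem q
    rw [hm, mem_singleton] at this
    rw [hm, this]
  have hlo_ne : ∀ q, lo q ≠ k + 1 := fun q h => by
    rcases eq_or_ne q p with rfl | hq
    · exact hlo_p.ne h
    · exact disjoint_left.mp (hdisj q p hq) (hlo_mem q) (h ▸ hk_mem)
  have hlo_inj : Function.Injective lo := fun q q' h => by
    by_contra hne
    exact disjoint_left.mp (hdisj q q' hne) (hlo_mem q) (h ▸ hlo_mem q')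
  have hk : k ≤ n := by have := hbound p _ hk_mem; omega
  obtain ⟨T, hT, hTlo⟩ := exists_monotone_skipLabel_eq hP hk
    (fun q => ⟨(hbound q _ (hlo_mem q)).1, (hbound q _ (hlo_mem q)).2, hlo_ne q⟩) hlo_inj
    fun q q' h => hlt q q' h _ (hlo_mem q) _ (hlo_mem q')
  refine ⟨(T, p, k), mem_extensionTriples.mpr ⟨hT, hk, maximal_iff_forall_gt.mpr ⟨?_, ?_⟩⟩, ?_⟩
  · rw [← skipLabel_lt_succ_iff, hTlo]
    exact hlo_p
  · intro q hq
    rw [not_lt, ← succ_lt_skipLabel_iff, hTlo]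
    exact hlt p q hq _ hk_mem _ (hlo_mem q)
  · funext q
    simp only [toSetValued, hTlo]
    split_ifs with hq
    · rw [hq, hS_p]
    · rw [hS_q q hq]

theorem card_isBarelySetValued [Fintype P] (hP : Fintype.card P = n) :
    Nat.card {S : P → Finset ℕ // IsBarelySetValued n S} = #(removableTriples P n) := by
  have himage : {S | IsBarelySetValued n S} =
      toSetValued '' (removableTriples P n : Set ((P ≃ Fin n) × P × ℕ)) := by
    ext S
    refine ⟨fun hS => ?_, ?_⟩
    · obtain ⟨x, hx, rfl⟩ := exists_toSetValued_eq hP hS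
      exact ⟨x, hx, rfl⟩
    · rintro ⟨⟨T, p, k⟩, hx, rfl⟩
      exact isBarelySetValued_toSetValued hx
  rw [← Set.ncard_coe_finset, ← toSetValued_injOn.ncard_image, ← himage]
  exact Nat.card_coe_set_eq _

end SetValued

section Rectangle

variable {a b : ℕ}

def cornerWeight (a b i j : ℕ) : ℚ := a * b - b * i - a * j

theorem sum_range_cornerWeight_telescope {R : ℕ → ℕ} (hR : Antitone R) (h0 : R 0 = b)
    (ha : R (a + 1) = 0) :
    ∑ i ∈ range a, ((if R (i + 1) < R i then cornerWeight a b i (R (i + 1)) else 0)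
      - if R (i + 2) < R (i + 1) then cornerWeight a b (i + 1) (R (i + 1)) else 0) = a * b := by
  -- Each summand is `u i - u (i + 1)`, because
  -- `cornerWeight a b i (R (i + 1)) = cornerWeight a b i (R i) + a * (R i - R (i + 1))`.
  let u : ℕ → ℚ := fun i => (if R (i + 1) < R i then cornerWeight a b i (R i) else 0) + a * R i
  have hstep : ∀ i, ((if R (i + 1) < R i then cornerWeight a b i (R (i + 1)) else 0)
      - if R (i + 2) < R (i + 1) then cornerWeight a b (i + 1) (R (i + 1)) else 0)
        = u i - u (i + 1) := by
    intro i
    have hi := hR (Nat.le_add_right i 1)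
    simp only [u, add_assoc, Nat.reduceAdd]
    by_cases h1 : R (i + 1) < R i
    · simp only [if_pos h1, cornerWeight]; split_ifs <;> ring
    · have h : R (i + 1) = R i := by omega
      simp only [h]; split_ifs <;> ring
  rw [sum_congr rfl fun i _ => hstep i, sum_range_sub']
  rcases Nat.eq_zero_or_pos (R a) with hRa | hRa <;> simp [u, h0, ha, hRa, cornerWeight, mul_comm]

-- `rowBound D (i + 1)` is the length of row `i` of `D`, below a full virtual row `rowBound D 0`.
def rowBound (D : Set (Fin a × Fin b)) : ℕ → ℕ
  | 0 => b
  | i + 1 => if h : i < a then #{j | (⟨i, h⟩, j) ∈ D} else 0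

variable {D : Set (Fin a × Fin b)}

theorem mem_iff_lt_rowBound (hD : IsLowerSet D) (i : Fin a) (j : Fin b) :
    (i, j) ∈ D ↔ (j : ℕ) < rowBound D (i + 1) := by
  have hrow : IsLowerSet {j | (i, j) ∈ D} := hD.preimage fun j j' h => Prod.mk_le_mk.mpr ⟨le_rfl, h⟩
  simp only [rowBound, i.isLt, dif_pos, Fin.eta]
  rcases hrow.eq_univ_or_Iio with h | ⟨c, h⟩
  · have h' : ∀ x, (i, x) ∈ D := fun x => Set.ext_iff.mp h x |>.mpr trivial
    simp [h']
  · have h' : ∀ x, (i, x) ∈ D ↔ x < c := fun x => Set.ext_iff.mp h x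
    rw [filter_congr fun x _ => h' x, filter_gt_eq_Iio, Fin.card_Iio, h', Fin.lt_def]

theorem rowBound_antitone (hD : IsLowerSet D) : Antitone (rowBound D) := by
  refine antitone_nat_of_succ_le fun i => ?_
  cases i with
  | zero =>
    simp only [rowBound]
    split_ifs
    · exact (card_le_univ _).trans (Fintype.card_fin b).le
    · exact Nat.zero_le b
  | succ i =>
    simp only [rowBound]
    split_ifs with h1 h2
    · refine card_le_card fun j hj => ?_
      simp only [mem_filter, mem_univ, true_and] at hj ⊢
      exact hD (Prod.mk_le_mk.mpr ⟨Fin.mk_le_mk.mpr (Nat.le_succ i), le_rfl⟩) hj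
    · omega
    · exact Nat.zero_le _
    · exact le_rfl

theorem rowBound_le (hD : IsLowerSet D) (i : ℕ) : rowBound D i ≤ b :=
  rowBound_antitone hD (Nat.zero_le i)

theorem rowBound_succ_of_le {i : ℕ} (h : a ≤ i) : rowBound D (i + 1) = 0 := by
  simp [rowBound, not_lt.mpr h]

theorem minimal_notMem_iff (hD : IsLowerSet D) {i : Fin a} {j : Fin b} :
    Minimal (· ∉ D) (i, j) ↔
      (j : ℕ) = rowBound D (i + 1) ∧ rowBound D (i + 1) < rowBound D i := by
  have hanti := rowBound_antitone hD
  have hmem := mem_iff_lt_rowBound hD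
  rw [minimal_iff_forall_lt, hmem]
  simp only [not_not, not_lt]
  constructor
  · rintro ⟨hj, hlt⟩
    have hj' : (j : ℕ) ≤ rowBound D (i + 1) := by
      by_contra! h
      have := (hmem i ⟨j - 1, by omega⟩).mp (hlt (by simp [Prod.mk_lt_mk, Fin.lt_def]; omega))
      simp only at this
      omega
    refine ⟨by omega, ?_⟩
    rcases Nat.eq_zero_or_pos (i : ℕ) with h | h
    · have hR0 : rowBound D i = b := by rw [h]; rfl
      have := j.isLt
      omega
    · have := (hmem ⟨i - 1, by omega⟩ j).mp (hlt (by simp [Prod.mk_lt_mk, Fin.lt_def]; omega))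
      rw [Nat.sub_add_cancel h] at this
      omega
  · rintro ⟨hj, hR⟩
    refine ⟨hj.symm.le, fun ⟨i', j'⟩ hlt => (hmem i' j').mpr ?_⟩
    simp only [Prod.mk_lt_mk, Fin.lt_def, Fin.le_def] at hlt
    rcases hlt with ⟨h1, h2⟩ | ⟨h1, h2⟩
    · have := hanti (show (i' : ℕ) + 1 ≤ i by omega); omega
    · have := hanti (show (i' : ℕ) + 1 ≤ i + 1 by omega); omega

theorem maximal_mem_iff (hD : IsLowerSet D) {i : Fin a} {j : Fin b} :
    Maximal (· ∈ D) (i, j) ↔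
      (j : ℕ) + 1 = rowBound D (i + 1) ∧ rowBound D (i + 2) < rowBound D (i + 1) := by
  have hanti := rowBound_antitone hD
  have hmem := mem_iff_lt_rowBound hD
  rw [maximal_iff_forall_gt, hmem]
  constructor
  · rintro ⟨hj, hgt⟩
    have hj' : rowBound D (i + 1) ≤ j + 1 := by
      by_cases h : (j : ℕ) + 1 < b
      · have := hgt (show (i, j) < (i, ⟨j + 1, h⟩) by simp [Prod.mk_lt_mk, Fin.lt_def])
        rw [hmem] at this
        simpa using this
      · have := rowBound_le hD (i + 1); omega
    have hi' : rowBound D (i + 2) ≤ j := by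
      by_cases h : (i : ℕ) + 1 < a
      · have := hgt (show (i, j) < (⟨i + 1, h⟩, j) by simp [Prod.mk_lt_mk, Fin.lt_def])
        rw [hmem] at this
        simpa using this
      · rw [rowBound_succ_of_le (by omega)]; exact Nat.zero_le _
    omega
  · rintro ⟨hj, hR⟩
    refine ⟨by omega, fun ⟨i', j'⟩ hlt => (hmem i' j').not.mpr ?_⟩
    simp only [Prod.mk_lt_mk, Fin.lt_def, Fin.le_def] at hlt
    rcases hlt with ⟨h1, h2⟩ | ⟨h1, h2⟩
    · have := hanti (show (i : ℕ) + 2 ≤ i' + 1 by omega); omega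
    · have := hanti (show (i : ℕ) + 1 ≤ i' + 1 by omega); omega

theorem sum_minimal_notMem_eq (hD : IsLowerSet D) :
    ∑ p with Minimal (· ∉ D) p, cornerWeight a b p.1 p.2 = ∑ i ∈ range a,
      if rowBound D (i + 1) < rowBound D i then cornerWeight a b i (rowBound D (i + 1)) else 0 := by
  rw [sum_filter, Fintype.sum_prod_type, ← Fin.sum_univ_eq_sum_range]
  refine sum_congr rfl fun i _ => ?_
  simp only [minimal_notMem_iff hD]
  by_cases c : rowBound D (i + 1) < rowBound D i
  · have hb : rowBound D (i + 1) < b := c.trans_le (rowBound_le hD i)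
    simp only [c, and_true, if_true]
    rw [Fin.sum_univ_eq_sum_range
        (fun j => if j = rowBound D (i + 1) then cornerWeight a b i j else 0),
      sum_ite_eq', if_pos (mem_range.mpr hb)]
  · simp [c]

theorem sum_maximal_mem_eq (hD : IsLowerSet D) :
    ∑ p with Maximal (· ∈ D) p, cornerWeight a b (p.1 + 1) (p.2 + 1) = ∑ i ∈ range a,
      if rowBound D (i + 2) < rowBound D (i + 1) then cornerWeight a b (i + 1) (rowBound D (i + 1))
      else 0 := by
  rw [sum_filter, Fintype.sum_prod_type, ← Fin.sum_univ_eq_sum_range]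
  refine sum_congr rfl fun i _ => ?_
  simp only [maximal_mem_iff hD]
  by_cases c : rowBound D (i + 2) < rowBound D (i + 1)
  · have hr : 1 ≤ rowBound D (i + 1) := by omega
    have hb := rowBound_le hD (i + 1)
    simp only [c, and_true, if_true]
    rw [Fin.sum_univ_eq_sum_range
        (fun j => if j + 1 = rowBound D (i + 1) then cornerWeight a b (i + 1) (j + 1) else 0),
      sum_eq_single_of_mem (rowBound D (i + 1) - 1) (mem_range.mpr (by omega))
        fun j _ hj => if_neg (by omega),
      if_pos (by omega), Nat.sub_add_cancel hr]
  · simp [c]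

theorem sum_minimal_sub_sum_maximal (hD : IsLowerSet D) :
    ∑ p with Minimal (· ∉ D) p, cornerWeight a b p.1 p.2
      - ∑ p with Maximal (· ∈ D) p, cornerWeight a b (p.1 + 1) (p.2 + 1) = a * b := by
  rw [sum_minimal_notMem_eq hD, sum_maximal_mem_eq hD, ← sum_sub_distrib]
  exact sum_range_cornerWeight_telescope (rowBound_antitone hD) rfl (rowBound_succ_of_le le_rfl)

theorem cornerWeight_sub_cornerWeight_add_one (i j : ℕ) :
    cornerWeight a b i j - cornerWeight a b (i + 1) (j + 1) = a + b := by
  simp only [cornerWeight]; push_cast; ring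

theorem sum_addable_sub_sum_removable {T : Fin a × Fin b ≃ Fin (a * b)} (hT : Monotone T) (k : ℕ) :
    ∑ p with Minimal (fun q => ¬ (T q : ℕ) < k) p, cornerWeight a b p.1 p.2
      - ∑ p with Maximal (fun q => (T q : ℕ) < k) p, cornerWeight a b (p.1 + 1) (p.2 + 1)
      = a * b :=
  sum_minimal_sub_sum_maximal (D := {q | (T q : ℕ) < k}) fun _ _ h hq =>
    (Fin.le_def.mp (hT h)).trans_lt hq

theorem add_mul_card_removableTriples :
    ((a : ℚ) + b) * #(removableTriples (Fin a × Fin b) (a * b))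
      = a * b * (a * b + 1) * #(linearExtensions (Fin a × Fin b) (a * b)) := by
  let w : Fin a × Fin b → ℚ := fun p => cornerWeight a b p.1 p.2
  let w' : Fin a × Fin b → ℚ := fun p => cornerWeight a b (p.1 + 1) (p.2 + 1)
  calc ((a : ℚ) + b) * #(removableTriples (Fin a × Fin b) (a * b))
      = ∑ x ∈ removableTriples (Fin a × Fin b) (a * b), (w x.2.1 - w' x.2.1) := by
        simp only [w, w', cornerWeight_sub_cornerWeight_add_one, sum_const, nsmul_eq_mul, mul_comm]
    _ = ∑ x ∈ addableTriples (Fin a × Fin b) (a * b), w x.2.1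
          - ∑ x ∈ removableTriples (Fin a × Fin b) (a * b), w' x.2.1 := by
        rw [sum_sub_distrib, sum_addableTriples_eq_sum_removableTriples]
    _ = ∑ T ∈ linearExtensions (Fin a × Fin b) (a * b), ∑ k ∈ range (a * b + 1), (a * b : ℚ) := by
        rw [addableTriples, removableTriples]
        rw [sum_extensionTriples, sum_extensionTriples, ← sum_sub_distrib]
        refine sum_congr rfl fun T hT => ?_
        rw [← sum_sub_distrib]
        refine sum_congr rfl fun k _ => ?_
        exact sum_addable_sub_sum_removable (mem_linearExtensions.mp hT) k
    _ = _ := by simp only [sum_const, card_range, nsmul_eq_mul]; push_cast; ring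

end Rectangle

end

end BarelySetValued

theorem stmt_5_general (a b : ℕ) :
    (Nat.card {S : Fin a × Fin b → Finset ℕ // IsBSVT a b S} : ℚ)
      = ((a : ℚ) * b) / ((a : ℚ) + b) * ((a : ℚ) * b + 1) *
        (Nat.card {T : Fin a × Fin b ≃ Fin (a * b) // IsSYT a b T} : ℚ) := by
  have hBSVT : Nat.card {S // IsBSVT a b S} =
      (BarelySetValued.removableTriples (Fin a × Fin b) (a * b)).card :=
    BarelySetValued.card_isBarelySetValued (by simp)
  have hSYT : Nat.card {T // IsSYT a b T} =
      (BarelySetValued.linearExtensions (Fin a × Fin b) (a * b)).card :=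
    BarelySetValued.card_linearExtensions
  rw [hBSVT, hSYT]
  rcases Nat.eq_zero_or_pos a with rfl | ha
  · simpa using Finset.eq_empty_of_forall_notMem fun x _ => x.2.1.1.elim0
  rw [div_mul_eq_mul_div, div_mul_eq_mul_div, eq_div_iff (by positivity), mul_comm,
    BarelySetValued.add_mul_card_removableTriples]

/-- `#SYT⁺¹(a×b) = (ab/(a+b))·(ab+1)·#SYT(a×b)`. -/
theorem stmt_5 (a b : ℕ) (ha : 1 ≤ a) (hb : 1 ≤ b) :
    (Nat.card {S : Fin a × Fin b → Finset ℕ // IsBSVT a b S} : ℚ)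
      = ((a : ℚ) * b) / ((a : ℚ) + b) * ((a : ℚ) * b + 1) *
        (Nat.card {T : Fin a × Fin b ≃ Fin (a * b) // IsSYT a b T} : ℚ) :=
  stmt_5_general a b
end

section
/- For any finite graded poset P with rank function rk and rank rk(P), the rank distribution μ_rk^q, which assigns to the ideal rk⁻¹({0,...,i}) probability q^{rk(P)−i}/[rk(P)+2]_q for i = −1, 0, ..., rk(P) (and probability 0 to all other ideals), is q-toggle-symmetric. -/
open scoped Classical

variable {P : Type*} [Fintype P] [PartialOrder P]

/-- The `q`-toggleability statistic `T_p^q = T_in,p − q·T_out,p`. -/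
noncomputable def Tq (q : ℝ) (p : P) (I : Finset P) : ℝ :=
  (if p ∉ I ∧ ∀ x ∉ I, ¬ x < p then (1 : ℝ) else 0)
    - q * (if p ∈ I ∧ ∀ x ∈ I, ¬ p < x then (1 : ℝ) else 0)

/-!
In the rank ideal `I_i = rk⁻¹({0,…,i})`, an element `p` is maximal exactly when
`i = rk p`, and `p` is minimal in the complement exactly when `i = rk p - 1`. Hence
`T_p^q(I_i)` is `1` at `i = rk p - 1`, `-q` at `i = rk p` and `0` otherwise, and the expectation
is proportional to `q^{r - rk p + 1} - q · q^{r - rk p} = 0`.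
-/

namespace GradedRank

variable {rk : P → ℕ} {r : ℕ}

noncomputable def rankIdeal {α : Type*} [Fintype α] (rk : α → ℕ) (i : ℤ) : Finset α :=
  Finset.univ.filter fun x => (rk x : ℤ) ≤ i

theorem mem_rankIdeal {α : Type*} [Fintype α] {rk : α → ℕ} {i : ℤ} {x : α} :
    x ∈ rankIdeal rk i ↔ (rk x : ℤ) ≤ i := by
  simp [rankIdeal]

theorem strictMono_of_covBy (hcov : ∀ p p' : P, p ⋖ p' → rk p' = rk p + 1) : StrictMono rk := by
  let _ := Fintype.toLocallyFiniteOrder (α := P)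
  exact (strictMono_iff_forall_covBy rk).2 fun a b hab => by rw [hcov a b hab]; exact lt_add_one _

theorem rank_le_of_isMax (hcov : ∀ p p' : P, p ⋖ p' → rk p' = rk p + 1)
    (hmax : ∀ p : P, (∀ x, ¬ p < x) → rk p = r) (a : P) : rk a ≤ r := by
  obtain ⟨b, hab, hb⟩ := Finite.exists_le_maximal (p := fun _ : P => True) trivial
  rw [← hmax b (isMax_iff_forall_not_lt.1 (maximal_true.1 hb))]
  exact (strictMono_of_covBy hcov).monotone hab

theorem minimal_compl_rankIdeal_iff (hmin : ∀ p : P, (∀ x, ¬ x < p) → rk p = 0)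
    (hcov : ∀ p p' : P, p ⋖ p' → rk p' = rk p + 1) (p : P) {i : ℤ} (hi : -1 ≤ i) :
    (p ∉ rankIdeal rk i ∧ ∀ x ∉ rankIdeal rk i, ¬ x < p) ↔ i = rk p - 1 := by
  simp only [mem_rankIdeal, not_le]
  constructor
  · rintro ⟨hip, hbelow⟩
    by_contra hne
    have hp : ¬ IsMin p := fun hp => by
      have := hmin p (isMin_iff_forall_not_lt.1 hp)
      omega
    obtain ⟨z, hzp⟩ := exists_covBy_of_wellFoundedGT hp
    have := hcov z p hzp
    exact hbelow z (by omega) hzp.lt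
  · rintro rfl
    refine ⟨by omega, fun x hx hxp => ?_⟩
    have := strictMono_of_covBy hcov hxp
    omega

theorem maximal_rankIdeal_iff (hcov : ∀ p p' : P, p ⋖ p' → rk p' = rk p + 1)
    (hmax : ∀ p : P, (∀ x, ¬ p < x) → rk p = r) (p : P) {i : ℤ} (hi : i ≤ r) :
    (p ∈ rankIdeal rk i ∧ ∀ x ∈ rankIdeal rk i, ¬ p < x) ↔ i = rk p := by
  simp only [mem_rankIdeal]
  constructor
  · rintro ⟨hpi, habove⟩
    by_contra hne
    have hp : ¬ IsMax p := fun hp => by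
      have := hmax p (isMax_iff_forall_not_lt.1 hp)
      omega
    obtain ⟨z, hpz⟩ := exists_covBy_of_wellFoundedLT hp
    have := hcov p z hpz
    exact habove z (by omega) hpz.lt
  · rintro rfl
    refine ⟨le_rfl, fun x hx hpx => ?_⟩
    have := strictMono_of_covBy hcov hpx
    omega

theorem Tq_rankIdeal (q : ℝ) (hmin : ∀ p : P, (∀ x, ¬ x < p) → rk p = 0)
    (hcov : ∀ p p' : P, p ⋖ p' → rk p' = rk p + 1)
    (hmax : ∀ p : P, (∀ x, ¬ p < x) → rk p = r) (p : P) {i : ℤ}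
    (hi : i ∈ Finset.Icc (-1 : ℤ) r) :
    Tq q p (rankIdeal rk i) =
      (if i = rk p - 1 then 1 else 0) - q * (if i = rk p then 1 else 0) := by
  rw [Finset.mem_Icc] at hi
  simp only [Tq, minimal_compl_rankIdeal_iff hmin hcov p hi.1,
    maximal_rankIdeal_iff hcov hmax p hi.2]

end GradedRank

theorem sum_zpow_mul_toggle_eq_zero (q : ℝ) {k r : ℕ} (hk : k ≤ r) :
    ∑ i ∈ Finset.Icc (-1 : ℤ) r,
      q ^ ((r : ℤ) - i) * ((if i = k - 1 then 1 else 0) - q * (if i = k then 1 else 0)) = 0 := by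
  have hk₁ : (k : ℤ) - 1 ∈ Finset.Icc (-1 : ℤ) r := Finset.mem_Icc.2 ⟨by omega, by omega⟩
  have hk₀ : (k : ℤ) ∈ Finset.Icc (-1 : ℤ) r := Finset.mem_Icc.2 ⟨by omega, by omega⟩
  simp only [mul_sub, mul_ite, mul_one, mul_zero, Finset.sum_sub_distrib,
    Finset.sum_ite_eq', hk₁, hk₀, if_true]
  have hexp : (r : ℤ) - (k - 1) = ((r - k + 1 : ℕ) : ℤ) := by omega
  have hexp' : (r : ℤ) - k = ((r - k : ℕ) : ℤ) := by omega
  rw [hexp, hexp', zpow_natCast, zpow_natCast, pow_succ]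
  ring

theorem stmt_14_general (q : ℝ) (rk : P → ℕ) (r : ℕ)
    (hminrk : ∀ p : P, (∀ x, ¬ x < p) → rk p = 0)
    (hcov : ∀ p p' : P, p ⋖ p' → rk p' = rk p + 1)
    (hmaxrk : ∀ p : P, (∀ x, ¬ p < x) → rk p = r)
    (p : P) :
    ∑ i ∈ Finset.Icc (-1 : ℤ) (r : ℤ),
        (q ^ ((r : ℤ) - i) / ∑ j ∈ Finset.Icc (-1 : ℤ) (r : ℤ), q ^ ((r : ℤ) - j)) *
          Tq q p (Finset.univ.filter fun x => (rk x : ℤ) ≤ i) = 0 := by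
  simp_rw [div_mul_eq_mul_div, ← Finset.sum_div]
  refine div_eq_zero_iff.2 (Or.inl ?_)
  rw [← sum_zpow_mul_toggle_eq_zero q (GradedRank.rank_le_of_isMax hcov hmaxrk p)]
  exact Finset.sum_congr rfl fun i hi => by
    rw [← GradedRank.Tq_rankIdeal q hminrk hcov hmaxrk p hi, GradedRank.rankIdeal]

/-- for a finite graded poset `P` with rank function `rk` and rank `r`,
the rank distribution — which puts probability `q^{r-i}/[r+2]_q` on the order ideal
`rk⁻¹({0,…,i})` for `i = −1, 0, …, r` — is `q`-toggle-symmetric: for every `p ∈ P`,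
`Σ_{i=-1}^{r} (q^{r-i}/[r+2]_q) · T_p^q(rk⁻¹({0,…,i})) = 0`. -/
theorem stmt_14 (q : ℝ) (hq : 0 < q) (rk : P → ℕ) (r : ℕ)
    (hminrk : ∀ p : P, (∀ x, ¬ x < p) → rk p = 0)
    (hcov : ∀ p p' : P, p ⋖ p' → rk p' = rk p + 1)
    (hmaxrk : ∀ p : P, (∀ x, ¬ p < x) → rk p = r)
    (p : P) :
    ∑ i ∈ Finset.Icc (-1 : ℤ) (r : ℤ),
        (q ^ ((r : ℤ) - i) / ∑ j ∈ Finset.Icc (-1 : ℤ) (r : ℤ), q ^ ((r : ℤ) - j)) *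
          Tq q p (Finset.univ.filter fun x => (rk x : ℤ) ≤ i) = 0 :=
  stmt_14_general q rk r hminrk hcov hmaxrk p
end

section
/- The number of standard Young tableaux of shape 2×b equals the Catalan number Cat(b) = binom(2b,b)/(b+1), via the bijection sending a tableau to the lattice path whose i-th step is up if i is in the first row and down if i is in the second row; the resulting path is a Dyck path of length 2b, and descents of the tableau correspond to valleys of the path. -/
/-!
Reading the entries of a tableau in increasing order and recording the row of each gives the path.
Rows increase, so the entry in cell `(r, c)` is the `(c+1)`-st step of its kind: a tableau is
determined by its path. Among the first `j` steps, the up steps are the first-row cells with entry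
`< j` and the down steps the second-row ones; since columns increase, the latter column indices are
among the former, which is the Dyck condition. Conversely a Dyck path puts its `i`-th step in row
`0` or `1` according to its direction, in the column counting the earlier steps of the same kind;
the Dyck condition makes this filling increase down the columns. Descents and valleys agree
entrywise, and the count is the enumeration of Dyck words by Catalan numbers.
-/

open scoped Classical

/-- A standard Young tableau of shape `2×b`: an order-preserving bijection from the
grid poset `Fin 2 × Fin b` (componentwise order) to `Fin (2*b)`. -/
def IsSYT2 (b : ℕ) (T : Fin 2 × Fin b ≃ Fin (2 * b)) : Prop :=
  ∀ p q : Fin 2 × Fin b, p ≤ q → T p ≤ T q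

/-- The lattice path of a tableau: the `i`-th step is up (`true`) if the value `i+1`
(0-indexed position `i`) lies in the first row, down (`false`) if in the second row. -/
def toPath (b : ℕ) (T : Fin 2 × Fin b ≃ Fin (2 * b)) : Fin (2 * b) → Bool :=
  fun i => decide ((T.symm i).1 = 0)

/-- Height of the path after `j` steps (up = +1, down = −1). -/
def dhgt (b : ℕ) (s : Fin (2 * b) → Bool) (j : ℕ) : ℤ :=
  ∑ k ∈ Finset.range j, if h : k < 2 * b then (if s ⟨k, h⟩ then (1 : ℤ) else -1) else 0

/-- A Dyck path of length `2b`: ends at height `0` and stays weakly above the x-axis. -/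
def IsDyck (b : ℕ) (s : Fin (2 * b) → Bool) : Prop :=
  dhgt b s (2 * b) = 0 ∧ ∀ j ≤ 2 * b, 0 ≤ dhgt b s j

/-- The valley set of a path: indices `i ∈ {1,…,2b-1}` such that the `i`-th step
(0-indexed `i-1`) is down and the `(i+1)`-st step (0-indexed `i`) is up. -/
noncomputable def Val (b : ℕ) (s : Fin (2 * b) → Bool) : Finset ℕ :=
  (Finset.Ico 1 (2 * b)).filter fun i =>
    ∀ h : i < 2 * b,
      s ⟨i - 1, lt_of_le_of_lt (Nat.sub_le i 1) h⟩ = false ∧ s ⟨i, h⟩ = true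

/-- Natural descents of a `2×b` SYT: entries `i` such that `i+1` lies in a higher row
than `i` (value `i` sits at 0-indexed position `i-1`). -/
noncomputable def DesT (b : ℕ) (T : Fin 2 × Fin b ≃ Fin (2 * b)) : Finset ℕ :=
  (Finset.Ico 1 (2 * b)).filter fun i =>
    ∀ h : i < 2 * b,
      ((T.symm ⟨i, h⟩).1 : ℕ)
        < ((T.symm ⟨i - 1, lt_of_le_of_lt (Nat.sub_le i 1) h⟩).1 : ℕ)

open Finset

section StepCount

variable {α : Type*} [DecidableEq α] {n : ℕ}

def stepCount (s : Fin n → α) (a : α) (j : ℕ) : ℕ := #{i : Fin n | (i : ℕ) < j ∧ s i = a}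

lemma stepCount_mono (s : Fin n → α) (a : α) {j j' : ℕ} (h : j ≤ j') :
    stepCount s a j ≤ stepCount s a j' :=
  card_le_card <| monotone_filter_right _ fun _ _ => And.imp_left fun hk => hk.trans_le h

lemma stepCount_lt_stepCount (s : Fin n → α) {i : Fin n} {j : ℕ} (h : (i : ℕ) < j) :
    stepCount s (s i) i < stepCount s (s i) j := by
  refine card_lt_card ((ssubset_iff_of_subset ?_).2 ⟨i, by simp [h], by simp⟩)
  exact monotone_filter_right _ fun _ _ => And.imp_left fun hk => hk.trans h

lemma stepCount_of_le (s : Fin n → α) (a : α) {j : ℕ} (h : n ≤ j) :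
    stepCount s a j = stepCount s a n :=
  congrArg card <| filter_congr fun i _ =>
    and_congr_left fun _ => iff_of_true (i.2.trans_le h) i.2

lemma count_take_ofFn (f : Fin n → α) (a : α) (j : ℕ) :
    ((List.ofFn f).take j).count a = stepCount f a j := by
  induction n generalizing j with
  | zero => simp [stepCount]
  | succ n ih =>
    cases j with
    | zero => simp [stepCount]
    | succ j =>
      rw [List.ofFn_succ, List.take_succ_cons, List.count_cons, ih, stepCount, stepCount,
        Fin.card_filter_univ_succ']
      simp [add_comm]

lemma stepCount_succ (s : Fin n → α) (a : α) (j : ℕ) :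
    stepCount s a (j + 1) =
      stepCount s a j + if h : j < n then (if s ⟨j, h⟩ = a then 1 else 0) else 0 := by
  rw [← count_take_ofFn, ← count_take_ofFn, List.take_add_one, List.count_append,
    List.getElem?_ofFn]
  split_ifs <;> simp_all

lemma stepCount_true_add_false (s : Fin n → Bool) (j : ℕ) :
    stepCount s true j + stepCount s false j = min n j := by
  rw [← Fin.card_filter_val_lt, ← card_filter_add_card_filter_not (fun i : Fin n => s i = true)]
  simp [stepCount, filter_filter]

end StepCount

section DyckPath

variable {b : ℕ}

lemma dhgt_eq_stepCount (s : Fin (2 * b) → Bool) (j : ℕ) :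
    dhgt b s j = stepCount s true j - stepCount s false j := by
  induction j with
  | zero => simp [dhgt, stepCount]
  | succ j ih =>
    rw [dhgt, sum_range_succ, ← dhgt, ih, stepCount_succ, stepCount_succ]
    split_ifs <;> simp_all <;> ring

lemma isDyck_iff_stepCount (s : Fin (2 * b) → Bool) :
    IsDyck b s ↔ stepCount s true (2 * b) = stepCount s false (2 * b) ∧
      ∀ j, stepCount s false j ≤ stepCount s true j := by
  simp only [IsDyck, dhgt_eq_stepCount, sub_eq_zero, sub_nonneg, Nat.cast_inj, Nat.cast_le]
  refine and_congr_right fun _ => ⟨fun h j => ?_, fun h j _ => h j⟩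
  rcases le_total j (2 * b) with hj | hj
  · exact h j hj
  · rw [stepCount_of_le _ _ hj, stepCount_of_le _ _ hj]
    exact h _ le_rfl

lemma IsDyck.stepCount_eq {s : Fin (2 * b) → Bool} (hs : IsDyck b s) (v : Bool) :
    stepCount s v (2 * b) = b := by
  have hsum := stepCount_true_add_false s (2 * b)
  have heq := ((isDyck_iff_stepCount s).1 hs).1
  rw [min_self] at hsum
  cases v <;> omega

end DyckPath

section Tableau

variable {b : ℕ} {T : Fin 2 × Fin b ≃ Fin (2 * b)}

lemma toPath_eq_decide_iff (T : Fin 2 × Fin b ≃ Fin (2 * b)) (r : Fin 2) (i : Fin (2 * b)) :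
    toPath b T i = decide (r = 0) ↔ (T.symm i).1 = r := by
  simp only [toPath]
  generalize (T.symm i).1 = x
  revert r x
  decide

lemma toPath_apply (T : Fin 2 × Fin b ≃ Fin (2 * b)) (p : Fin 2 × Fin b) :
    toPath b T (T p) = decide (p.1 = 0) := by
  simp [toPath]

lemma stepCount_toPath (T : Fin 2 × Fin b ≃ Fin (2 * b)) (r : Fin 2) (j : ℕ) :
    stepCount (toPath b T) (decide (r = 0)) j = #{c : Fin b | (T (r, c) : ℕ) < j} := by
  simp only [stepCount, toPath_eq_decide_iff]
  refine card_nbij' (fun i => (T.symm i).2) (fun c => T (r, c)) ?_ ?_ ?_ ?_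
  · intro i hi
    obtain ⟨hi, rfl⟩ := (mem_filter_univ i).1 (mem_coe.1 hi)
    simpa using hi
  · intro c hc
    simpa using hc
  · intro i hi
    obtain ⟨-, rfl⟩ := (mem_filter_univ i).1 (mem_coe.1 hi)
    simp
  · intro c _
    simp

lemma IsSYT2.strictMono_row (hT : IsSYT2 b T) (r : Fin 2) : StrictMono fun c => T (r, c) :=
  Monotone.strictMono_of_injective (fun _ _ h => hT _ _ ⟨le_rfl, h⟩)
    fun _ _ h => by simpa using T.injective h

lemma IsSYT2.col_eq_stepCount (hT : IsSYT2 b T) (i : Fin (2 * b)) :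
    ((T.symm i).2 : ℕ) = stepCount (toPath b T) (toPath b T i) i := by
  obtain ⟨⟨r, c⟩, rfl⟩ := T.surjective i
  rw [toPath_apply, stepCount_toPath, T.symm_apply_apply]
  simp_rw [Fin.val_fin_lt, (hT.strictMono_row r).lt_iff_lt, filter_gt_eq_Iio, Fin.card_Iio]

lemma toPath_isDyck (hT : IsSYT2 b T) : IsDyck b (toPath b T) := by
  have h0 : ∀ j, stepCount (toPath b T) true j = _ := stepCount_toPath T 0
  have h1 : ∀ j, stepCount (toPath b T) false j = _ := stepCount_toPath T 1
  refine (isDyck_iff_stepCount _).2 ⟨?_, fun j => ?_⟩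
  · simp [h0, h1]
  · rw [h0, h1]
    exact card_le_card <| monotone_filter_right _ fun c _ hc =>
      lt_of_le_of_lt (hT (0, c) (1, c) (Prod.mk_le_mk.2 ⟨Fin.zero_le _, le_rfl⟩)) hc

lemma toPath_injOn : Set.InjOn (toPath b) {T | IsSYT2 b T} := by
  intro T hT T' hT' h
  refine Equiv.symm_bijective.injective (Equiv.ext fun i => Prod.ext ?_ (Fin.ext ?_))
  · exact (toPath_eq_decide_iff T _ i).1 (by rw [h]; rfl)
  · rw [hT.col_eq_stepCount, hT'.col_eq_stepCount, h]

end Tableau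

section OfDyck

variable {b : ℕ} {s : Fin (2 * b) → Bool}

def dyckCell (hs : IsDyck b s) (i : Fin (2 * b)) : Fin 2 × Fin b :=
  (if s i then 0 else 1,
    ⟨stepCount s (s i) i, (stepCount_lt_stepCount s i.2).trans_eq (hs.stepCount_eq _)⟩)

lemma le_of_dyckCell_le (hs : IsDyck b s) {i j : Fin (2 * b)}
    (h : dyckCell hs i ≤ dyckCell hs j) : i ≤ j := by
  by_contra! hji
  have hrow : (if s i then (0 : Fin 2) else 1) ≤ if s j then 0 else 1 := h.1
  have hcol : stepCount s (s i) i ≤ stepCount s (s j) j := h.2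
  have hsame := stepCount_lt_stepCount s (j := i) hji
  cases hsi : s i <;> cases hsj : s j <;> simp only [hsi, hsj] at hrow hcol hsame
  · omega
  · exact absurd hrow (by decide)
  · -- `j` down and `i` up: the Dyck condition after step `j` puts `j` in an earlier column
    have hstep := stepCount_lt_stepCount s (Nat.lt_add_one (j : ℕ))
    have hprefix := ((isDyck_iff_stepCount s).1 hs).2 (j + 1)
    have hmono := stepCount_mono s true (j' := i) (by omega : (j : ℕ) + 1 ≤ i)
    rw [hsj] at hstep
    omega
  · omega

lemma dyckCell_bijective (hs : IsDyck b s) : Function.Bijective (dyckCell hs) := by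
  refine (Fintype.bijective_iff_injective_and_card _).2 ⟨fun i j h => ?_, by simp⟩
  exact le_antisymm (le_of_dyckCell_le hs h.le) (le_of_dyckCell_le hs h.ge)

noncomputable def ofDyck (hs : IsDyck b s) : Fin 2 × Fin b ≃ Fin (2 * b) :=
  (Equiv.ofBijective _ (dyckCell_bijective hs)).symm

lemma ofDyck_isSYT2 (hs : IsDyck b s) : IsSYT2 b (ofDyck hs) := by
  intro p q hpq
  let e := Equiv.ofBijective _ (dyckCell_bijective hs)
  rw [← e.apply_symm_apply p, ← e.apply_symm_apply q] at hpq
  exact le_of_dyckCell_le hs hpq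

lemma toPath_ofDyck (hs : IsDyck b s) : toPath b (ofDyck hs) = s := by
  funext i
  cases h : s i <;> simp [toPath, ofDyck, dyckCell, h]

lemma toPath_bijOn : Set.BijOn (toPath b) {T | IsSYT2 b T} {s | IsDyck b s} :=
  ⟨fun _ hT => toPath_isDyck hT, toPath_injOn,
    fun _ hs => ⟨ofDyck hs, ofDyck_isSYT2 hs, toPath_ofDyck hs⟩⟩

end OfDyck

lemma desT_eq_val {b : ℕ} (T : Fin 2 × Fin b ≃ Fin (2 * b)) : DesT b T = Val b (toPath b T) := by
  have key : ∀ x y : Fin 2, (x : ℕ) < y ↔ decide (y = 0) = false ∧ decide (x = 0) = true := by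
    decide
  exact filter_congr fun i _ => forall_congr' fun _ => key _ _

section DyckWord

open DyckStep

variable {n b : ℕ}

def toDyckSteps (s : Fin n → Bool) : List DyckStep := List.ofFn fun i => if s i then U else D

lemma count_take_toDyckSteps (s : Fin n → Bool) (v : Bool) (j : ℕ) :
    ((toDyckSteps s).take j).count (if v then U else D) = stepCount s v j := by
  have hinj : ∀ x y : Bool, ((if x then U else D) = if y then U else D) ↔ x = y := by decide
  rw [toDyckSteps, count_take_ofFn]
  exact congrArg card <| filter_congr fun i _ => and_congr_right fun _ => hinj _ _

lemma count_toDyckSteps (s : Fin n → Bool) (v : Bool) :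
    (toDyckSteps s).count (if v then U else D) = stepCount s v n := by
  rw [← count_take_toDyckSteps, List.take_of_length_le (by simp [toDyckSteps])]

lemma isDyck_iff_toDyckSteps (s : Fin (2 * b) → Bool) :
    IsDyck b s ↔ (toDyckSteps s).count U = (toDyckSteps s).count D ∧
      ∀ j, ((toDyckSteps s).take j).count D ≤ ((toDyckSteps s).take j).count U := by
  have hU := count_take_toDyckSteps s true
  have hD := count_take_toDyckSteps s false
  simp only [if_true, Bool.false_eq_true, if_false] at hU hD
  have hall : (toDyckSteps s).take (2 * b) = toDyckSteps s :=
    List.take_of_length_le (by simp [toDyckSteps])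
  simp only [isDyck_iff_stepCount, ← hU, ← hD, hall]

lemma toDyckSteps_getElem_eq_U (l : List DyckStep) (hl : l.length = 2 * b) :
    toDyckSteps (fun i : Fin (2 * b) => decide (l[(i : ℕ)] = U)) = l := by
  refine List.ext_getElem (by simp [toDyckSteps, hl]) fun k _ _ => ?_
  rcases DyckStep.dichotomy l[k] with h | h <;> simp [toDyckSteps, h]

lemma length_toList_of_semilength_eq {p : DyckWord} (hp : p.semilength = b) :
    p.toList.length = 2 * b := by
  rw [← DyckWord.two_mul_semilength_eq_length, hp]

noncomputable def dyckPathEquivDyckWord :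
    {s : Fin (2 * b) → Bool // IsDyck b s} ≃ {p : DyckWord // p.semilength = b} where
  toFun s := ⟨⟨toDyckSteps s.1, ((isDyck_iff_toDyckSteps s.1).1 s.2).1,
      ((isDyck_iff_toDyckSteps s.1).1 s.2).2⟩,
    (count_toDyckSteps s.1 true).trans (s.2.stepCount_eq true)⟩
  invFun p := ⟨fun i => decide (p.1.toList[(i : ℕ)]'(by
      rw [length_toList_of_semilength_eq p.2]; exact i.2) = U), by
    rw [isDyck_iff_toDyckSteps, toDyckSteps_getElem_eq_U _ (length_toList_of_semilength_eq p.2)]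
    exact ⟨p.1.count_U_eq_count_D, p.1.count_D_le_count_U⟩⟩
  left_inv s := by
    ext i
    cases h : s.1 i <;> simp [toDyckSteps, h]
  right_inv p :=
    Subtype.ext <| DyckWord.ext <| toDyckSteps_getElem_eq_U _ (length_toList_of_semilength_eq p.2)

lemma card_isSYT2_eq_catalan (b : ℕ) :
    Nat.card {T : Fin 2 × Fin b ≃ Fin (2 * b) // IsSYT2 b T} = catalan b := by
  have e : {T // IsSYT2 b T} ≃ {p : DyckWord // p.semilength = b} :=
    (toPath_bijOn.equiv _).trans dyckPathEquivDyckWord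
  rw [Nat.card_congr e, Nat.card_eq_fintype_card, DyckWord.card_dyckWord_semilength_eq_catalan]

end DyckWord

/-- `toPath` is a bijection from SYTs of shape `2×b` onto Dyck paths of
length `2b`, descents correspond to valleys, and the number of SYTs of shape `2×b`
equals the Catalan number `binom(2b,b)/(b+1)`. -/
theorem stmt_18 (b : ℕ) :
    Set.BijOn (toPath b) {T | IsSYT2 b T} {s | IsDyck b s} ∧
      (∀ T : Fin 2 × Fin b ≃ Fin (2 * b), IsSYT2 b T → DesT b T = Val b (toPath b T)) ∧
      Nat.card {T : Fin 2 × Fin b ≃ Fin (2 * b) // IsSYT2 b T}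
        = (2 * b).choose b / (b + 1) := by
  refine ⟨toPath_bijOn, fun T _ => desT_eq_val T, ?_⟩
  rw [card_isSYT2_eq_catalan, catalan_eq_centralBinom_div, Nat.centralBinom]
end
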